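/- For every integer n ≥ 5, every 5-antichain saturated family of subsets of [n] has size at least 4n − 2. -/
import Mathlib

open Finset

/-- A family `F` of finite subsets of ℕ contains a `k`-antichain: there are `k` sets in `F`
that are pairwise incomparable under inclusion. -/
def ContainsAntichain (k : ℕ) (F : Finset (Finset ℕ)) : Prop :=
  ∃ S ⊆ F, S.card = k ∧ ∀ A ∈ S, ∀ B ∈ S, A ≠ B → ¬ A ⊆ B

/-- `F` is a `k`-antichain saturated family of subsets of `[n] = {1, …, n}`:
all members are subsets of `[n]`, `F` contains no `k`-antichain, but adding any new
subset of `[n]` creates a `k`-antichain. -/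
def IsAntichainSaturated (n k : ℕ) (F : Finset (Finset ℕ)) : Prop :=
  (∀ A ∈ F, A ⊆ Finset.Icc 1 n) ∧
  ¬ ContainsAntichain k F ∧
  ∀ X ⊆ Finset.Icc 1 n, X ∉ F → ContainsAntichain k (insert X F)

namespace FiveSat
lemma ne_of_elem {a : ℕ} {s t : Finset ℕ} (h1 : a ∈ s) (h2 : a ∉ t) : s ≠ t :=
  fun he => h2 (he ▸ h1)

lemma notMem_insert {a b : ℕ} {s : Finset ℕ} (h1 : a ≠ b) (h2 : a ∉ s) :
    a ∉ insert b s := by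
  intro h
  rcases Finset.mem_insert.mp h with h | h
  · exact h1 h
  · exact h2 h

lemma four_distinct_eq {c1 c2 c3 d0 m : ℕ} (h1 : c1 < 4) (h2 : c2 < 4) (h3 : c3 < 4)
    (hd : d0 < 4) (hm : m < 4) (h12 : c1 ≠ c2) (h13 : c1 ≠ c3) (h23 : c2 ≠ c3)
    (hd1 : c1 ≠ d0) (hd2 : c2 ≠ d0) (hd3 : c3 ≠ d0)
    (hm1 : m ≠ c1) (hm2 : m ≠ c2) (hmd : m ≠ d0) : m = c3 := by omega

lemma four_distinct_absurd {c1 c2 c3 d0 m : ℕ} (h1 : c1 < 4) (h2 : c2 < 4) (h3 : c3 < 4)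
    (hd : d0 < 4) (hm : m < 4) (h12 : c1 ≠ c2) (h13 : c1 ≠ c3) (h23 : c2 ≠ c3)
    (hd1 : c1 ≠ d0) (hd2 : c2 ≠ d0) (hd3 : c3 ≠ d0)
    (hm1 : m ≠ c1) (hm2 : m ≠ c2) (hm3 : m ≠ c3) (hmd : m ≠ d0) : False := by omega


lemma not_subset_of_card_eq {A B : Finset ℕ} (h : A.card = B.card) (hne : A ≠ B) :
    ¬ A ⊆ B := fun hs => hne (Finset.eq_of_subset_of_card_le hs h.symm.le)

lemma subset_of_comp_card_le {A B : Finset ℕ} (h : A ⊆ B ∨ B ⊆ A) (hc : A.card ≤ B.card) :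
    A ⊆ B := by
  rcases h with h | h
  · exact h
  · rw [Finset.eq_of_subset_of_card_le h hc]

lemma eq_of_comp_card_eq {A B : Finset ℕ} (h : A ⊆ B ∨ B ⊆ A) (hc : A.card = B.card) :
    A = B :=
  Finset.eq_of_subset_of_card_le (subset_of_comp_card_le h hc.le) hc.ge

def IsChainF (S : Finset (Finset ℕ)) : Prop := ∀ A ∈ S, ∀ B ∈ S, A ⊆ B ∨ B ⊆ A

def IsACF (S : Finset (Finset ℕ)) : Prop := ∀ A ∈ S, ∀ B ∈ S, A ≠ B → ¬ A ⊆ B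

theorem dilworth (N : ℕ) : ∀ (F : Finset (Finset ℕ)), F.card = N → ∀ (k : ℕ),
    (∀ S ⊆ F, IsACF S → S.card ≤ k) →
    ∃ χ : Finset ℕ → ℕ, (∀ A ∈ F, χ A < k) ∧
      (∀ A ∈ F, ∀ B ∈ F, χ A = χ B → A ⊆ B ∨ B ⊆ A) := by
  induction N using Nat.strong_induction_on with
  | _ N ih =>
    intro F hFcard k hk
    classical
    rcases F.eq_empty_or_nonempty with rfl | ⟨A₀, hA₀⟩
    · exact ⟨fun _ => 0, by simp, by simp⟩
    have hk1 : 1 ≤ k := by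
      have h1 : IsACF {A₀} := by
        intro A hA B hB hne
        simp only [Finset.mem_singleton] at hA hB
        subst hA; subst hB; exact absurd rfl hne
      have := hk {A₀} (by simpa using hA₀) h1
      simpa using this
    -- maximal chain C
    set P := F.powerset.filter IsChainF with hP
    have hPne : ({A₀} : Finset (Finset ℕ)) ∈ P := by
      refine Finset.mem_filter.mpr ⟨Finset.mem_powerset.mpr (by simpa using hA₀), ?_⟩
      intro A hA B hB
      simp only [Finset.mem_singleton] at hA hB
      subst hA; subst hB; left; rfl
    obtain ⟨C, hCP, hCmax⟩ := Finset.exists_max_image P Finset.card ⟨_, hPne⟩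
    have hCF : C ⊆ F := Finset.mem_powerset.mp (Finset.mem_filter.mp hCP).1
    have hCchain : IsChainF C := (Finset.mem_filter.mp hCP).2
    have hCne : C.Nonempty := by
      rw [← Finset.card_pos]
      have := hCmax _ hPne
      simp only [Finset.card_singleton] at this
      omega
    obtain ⟨t, htC, htmax⟩ := Finset.exists_max_image C Finset.card hCne
    have htTop : ∀ c ∈ C, c ⊆ t := fun c hc =>
      subset_of_comp_card_le (hCchain c hc t htC) (htmax c hc)
    have htF : t ∈ F := hCF htC
    obtain ⟨b, hbC, hbmin⟩ := Finset.exists_min_image C Finset.card hCne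
    have hbBot : ∀ c ∈ C, b ⊆ c := fun c hc =>
      subset_of_comp_card_le (hCchain b hbC c hc) (hbmin c hc)
    have hbF : b ∈ F := hCF hbC
    have hgrow : ∀ B ∈ F, B ∉ C → IsChainF (insert B C) → False := by
      intro B hBF hBC hch
      have hins : insert B C ∈ P :=
        Finset.mem_filter.mpr ⟨Finset.mem_powerset.mpr (by
          intro x hx
          rcases Finset.mem_insert.mp hx with rfl | hx
          · exact hBF
          · exact hCF hx), hch⟩
      have := hCmax _ hins
      rw [Finset.card_insert_of_notMem hBC] at this
      omega
    have htMaximal : ∀ B ∈ F, t ⊆ B → B = t := by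
      intro B hBF htB
      by_contra hne
      have hBC : B ∉ C := fun hBC => hne (Finset.Subset.antisymm (htTop B hBC) htB)
      refine hgrow B hBF hBC ?_
      intro x hx y hy
      rcases Finset.mem_insert.mp hx with hx | hx <;> rcases Finset.mem_insert.mp hy with hy | hy
      · left; rw [hx, hy]
      · right; rw [hx]; exact (htTop y hy).trans htB
      · left; rw [hy]; exact (htTop x hx).trans htB
      · exact hCchain x hx y hy
    have hbMinimal : ∀ B ∈ F, B ⊆ b → B = b := by
      intro B hBF hBb
      by_contra hne
      have hBC : B ∉ C := fun hBC => hne (Finset.Subset.antisymm hBb (hbBot B hBC))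
      refine hgrow B hBF hBC ?_
      intro x hx y hy
      rcases Finset.mem_insert.mp hx with hx | hx <;> rcases Finset.mem_insert.mp hy with hy | hy
      · left; rw [hx, hy]
      · left; rw [hx]; exact hBb.trans (hbBot y hy)
      · right; rw [hy]; exact hBb.trans (hbBot x hx)
      · exact hCchain x hx y hy
    set W := F \ C with hW
    have hWF : W ⊆ F := Finset.sdiff_subset
    have hWcard : W.card < N := by
      rw [hW, Finset.card_sdiff_of_subset hCF]
      have h1 : 1 ≤ C.card := Finset.card_pos.mpr hCne
      have h2 : C.card ≤ F.card := Finset.card_le_card hCF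
      omega
    by_cases hbig : ∃ A ⊆ W, IsACF A ∧ A.card = k
    · obtain ⟨A, hAW, hAac, hAcard⟩ := hbig
      have hAF : A ⊆ F := hAW.trans hWF
      set Dm := F.filter (fun X => ∃ a ∈ A, X ⊆ a) with hDm
      set Dp := F.filter (fun X => ∃ a ∈ A, a ⊆ X) with hDp
      have hDmF : Dm ⊆ F := Finset.filter_subset _ _
      have hDpF : Dp ⊆ F := Finset.filter_subset _ _
      have hcover : ∀ X ∈ F, X ∈ Dm ∨ X ∈ Dp := by
        intro X hX
        by_contra h
        push_neg at h
        obtain ⟨h1, h2⟩ := h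
        rw [hDm, Finset.mem_filter] at h1
        rw [hDp, Finset.mem_filter] at h2
        push_neg at h1 h2
        have h1' := h1 hX
        have h2' := h2 hX
        have hXA : X ∉ A := fun hXA => h1' X hXA (Finset.Subset.refl X)
        have hac : IsACF (insert X A) := by
          intro Pp hPp Q hQ hne
          rcases Finset.mem_insert.mp hPp with hPp | hPp <;>
            rcases Finset.mem_insert.mp hQ with hQ | hQ
          · exact absurd (hPp.trans hQ.symm) hne
          · rw [hPp]; exact h1' Q hQ
          · rw [hQ]; exact h2' Pp hPp
          · exact hAac Pp hPp Q hQ hne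
        have := hk (insert X A) (by
          intro y hy
          rcases Finset.mem_insert.mp hy with rfl | hy
          · exact hX
          · exact hAF hy) hac
        rw [Finset.card_insert_of_notMem hXA, hAcard] at this
        omega
      have hADm : A ⊆ Dm := fun a ha =>
        Finset.mem_filter.mpr ⟨hAF ha, a, ha, Finset.Subset.refl a⟩
      have hADp : A ⊆ Dp := fun a ha =>
        Finset.mem_filter.mpr ⟨hAF ha, a, ha, Finset.Subset.refl a⟩
      have hinter : ∀ X ∈ Dm, X ∈ Dp → X ∈ A := by
        intro X hXm hXp
        obtain ⟨hXF, a1, ha1, hXa1⟩ := Finset.mem_filter.mp hXm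
        obtain ⟨-, a2, ha2, ha2X⟩ := Finset.mem_filter.mp hXp
        have h21 : a2 ⊆ a1 := ha2X.trans hXa1
        have he : a2 = a1 := by
          by_contra hne
          exact hAac a2 ha2 a1 ha1 hne h21
        subst he
        have : X = a2 := Finset.Subset.antisymm hXa1 ha2X
        exact this ▸ ha2
      have htDm : t ∉ Dm := by
        intro ht
        obtain ⟨-, a, haA, hta⟩ := Finset.mem_filter.mp ht
        have hat : a = t := by
          have := htMaximal a (hAF haA) hta
          exact this
        have haW : a ∈ W := hAW haA
        rw [hat] at haW
        exact (Finset.mem_sdiff.mp haW).2 htC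
      have hbDp : b ∉ Dp := by
        intro hb
        obtain ⟨-, a, haA, hab⟩ := Finset.mem_filter.mp hb
        have hat : a = b := hbMinimal a (hAF haA) hab
        have haW : a ∈ W := hAW haA
        rw [hat] at haW
        exact (Finset.mem_sdiff.mp haW).2 hbC
      have hDmcard : Dm.card < N := by
        have hss : Dm ⊂ F := ⟨hDmF, fun h => htDm (h htF)⟩
        have := Finset.card_lt_card hss
        omega
      have hDpcard : Dp.card < N := by
        have hss : Dp ⊂ F := ⟨hDpF, fun h => hbDp (h hbF)⟩
        have := Finset.card_lt_card hss
        omega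
      obtain ⟨χm, hχm4, hχmchain⟩ := ih Dm.card hDmcard Dm rfl k
        (fun S hS hac => hk S (hS.trans hDmF) hac)
      obtain ⟨χp, hχp4, hχpchain⟩ := ih Dp.card hDpcard Dp rfl k
        (fun S hS hac => hk S (hS.trans hDpF) hac)
      have hinjp : Set.InjOn χp A := by
        intro a ha b hb hab
        by_contra hne
        rcases hχpchain a (hADp ha) b (hADp hb) hab with h | h
        · exact hAac a ha b hb hne h
        · exact hAac b hb a ha (Ne.symm hne) h
      have himgp : A.image χp = Finset.range k := by
        apply Finset.eq_of_subset_of_card_le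
        · intro m hm
          simp only [Finset.mem_image] at hm
          obtain ⟨a, ha, rfl⟩ := hm
          simpa using hχp4 a (hADp ha)
        · rw [Finset.card_image_of_injOn hinjp, hAcard, Finset.card_range]
      have hexp : ∀ m : ℕ, ∃ a : Finset ℕ, m < k → a ∈ A ∧ χp a = m := by
        intro m
        by_cases hm : m < k
        · have : m ∈ A.image χp := by rw [himgp]; simpa using hm
          simp only [Finset.mem_image] at this
          obtain ⟨a, ha, hχa⟩ := this
          exact ⟨a, fun _ => ⟨ha, hχa⟩⟩
        · exact ⟨∅, fun h => absurd h hm⟩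
      choose g hg using hexp
      refine ⟨fun X => if X ∈ Dm then χm X else χm (g (χp X)), ?_, ?_⟩
      · intro X hXF
        by_cases hXm : X ∈ Dm
        · simpa [hXm] using hχm4 X hXm
        · simp only [hXm, if_false]
          have hXp : X ∈ Dp := (hcover X hXF).resolve_left hXm
          obtain ⟨hgA, -⟩ := hg (χp X) (hχp4 X hXp)
          exact hχm4 _ (hADm hgA)
      · intro X hX Y hY hXY
        simp only at hXY
        by_cases hXm : X ∈ Dm <;> by_cases hYm : Y ∈ Dm
        · rw [if_pos hXm, if_pos hYm] at hXY
          exact hχmchain X hXm Y hYm hXY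
        · rw [if_pos hXm, if_neg hYm] at hXY
          have hYp : Y ∈ Dp := (hcover Y hY).resolve_left hYm
          obtain ⟨hgA, hgχ⟩ := hg (χp Y) (hχp4 Y hYp)
          have hXa : X ⊆ g (χp Y) := by
            rcases hχmchain X hXm _ (hADm hgA) hXY with h | h
            · exact h
            · have hXp : X ∈ Dp := Finset.mem_filter.mpr ⟨hX, _, hgA, h⟩
              have hXA : X ∈ A := hinter X hXm hXp
              by_cases hne : g (χp Y) = X
              · exact hne ▸ Finset.Subset.refl _
              · exact absurd h (hAac _ hgA X hXA hne)
          have haY : g (χp Y) ⊆ Y := by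
            rcases hχpchain _ (hADp hgA) Y hYp hgχ with h | h
            · exact h
            · exact absurd (Finset.mem_filter.mpr ⟨hY, _, hgA, h⟩) hYm
          exact Or.inl (hXa.trans haY)
        · rw [if_neg hXm, if_pos hYm] at hXY
          have hXp : X ∈ Dp := (hcover X hX).resolve_left hXm
          obtain ⟨hgA, hgχ⟩ := hg (χp X) (hχp4 X hXp)
          have hYa : Y ⊆ g (χp X) := by
            rcases hχmchain Y hYm _ (hADm hgA) hXY.symm with h | h
            · exact h
            · have hYp : Y ∈ Dp := Finset.mem_filter.mpr ⟨hY, _, hgA, h⟩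
              have hYA : Y ∈ A := hinter Y hYm hYp
              by_cases hne : g (χp X) = Y
              · exact hne ▸ Finset.Subset.refl _
              · exact absurd h (hAac _ hgA Y hYA hne)
          have haX : g (χp X) ⊆ X := by
            rcases hχpchain _ (hADp hgA) X hXp hgχ with h | h
            · exact h
            · exact absurd (Finset.mem_filter.mpr ⟨hX, _, hgA, h⟩) hXm
          exact Or.inr (hYa.trans haX)
        · rw [if_neg hXm, if_neg hYm] at hXY
          have hXp : X ∈ Dp := (hcover X hX).resolve_left hXm
          have hYp : Y ∈ Dp := (hcover Y hY).resolve_left hYm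
          obtain ⟨hgA1, hgχ1⟩ := hg (χp X) (hχp4 X hXp)
          obtain ⟨hgA2, hgχ2⟩ := hg (χp Y) (hχp4 Y hYp)
          have hgg : g (χp X) = g (χp Y) := by
            rcases hχmchain _ (hADm hgA1) _ (hADm hgA2) hXY with h | h
            · by_contra hne
              exact hAac _ hgA1 _ hgA2 hne h
            · by_contra hne
              exact hAac _ hgA2 _ hgA1 (Ne.symm hne) h
          have : χp X = χp Y := by rw [← hgχ1, ← hgχ2, hgg]
          exact hχpchain X hXp Y hYp this
    · push_neg at hbig
      have hW' : ∀ S ⊆ W, IsACF S → S.card ≤ k - 1 := by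
        intro S hS hSac
        have h1 : S.card ≤ k := hk S (hS.trans hWF) hSac
        by_contra h
        push_neg at h
        have : S.card = k := by omega
        exact absurd this (hbig S hS hSac)
      obtain ⟨χ', hχ'4, hχ'chain⟩ := ih W.card hWcard W rfl (k-1) hW'
      refine ⟨fun X => if X ∈ C then k - 1 else χ' X, ?_, ?_⟩
      · intro X hXF
        by_cases hXC : X ∈ C
        · simp only [hXC, if_true]; omega
        · simp only [hXC, if_false]
          have := hχ'4 X (Finset.mem_sdiff.mpr ⟨hXF, hXC⟩)
          omega
      · intro X hX Y hY h
        simp only at h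
        by_cases hXC : X ∈ C <;> by_cases hYC : Y ∈ C
        · exact hCchain X hXC Y hYC
        · rw [if_pos hXC, if_neg hYC] at h
          have := hχ'4 Y (Finset.mem_sdiff.mpr ⟨hY, hYC⟩)
          omega
        · rw [if_neg hXC, if_pos hYC] at h
          have := hχ'4 X (Finset.mem_sdiff.mpr ⟨hX, hXC⟩)
          omega
        · rw [if_neg hXC, if_neg hYC] at h
          exact hχ'chain X (Finset.mem_sdiff.mpr ⟨hX, hXC⟩) Y (Finset.mem_sdiff.mpr ⟨hY, hYC⟩) h


set_option maxHeartbeats 1000000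


/-- The context: a 5-antichain-saturated family together with a chain coloring. -/
structure Ctx (n : ℕ) (F : Finset (Finset ℕ)) (χ : Finset ℕ → ℕ) : Prop where
  hn : 5 ≤ n
  sub : ∀ A ∈ F, A ⊆ Finset.Icc 1 n
  noAC : ¬ ContainsAntichain 5 F
  sat : ∀ X ⊆ Finset.Icc 1 n, X ∉ F → ContainsAntichain 5 (insert X F)
  lt4 : ∀ A ∈ F, χ A < 4
  chain : ∀ A ∈ F, ∀ B ∈ F, χ A = χ B → A ⊆ B ∨ B ⊆ A

namespace Ctx

variable {n : ℕ} {F : Finset (Finset ℕ)} {χ : Finset ℕ → ℕ}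

lemma sub_of_card_le (hC : Ctx n F χ) {A B : Finset ℕ} (hA : A ∈ F) (hB : B ∈ F)
    (h : χ A = χ B) (hc : A.card ≤ B.card) : A ⊆ B :=
  subset_of_comp_card_le (hC.chain A hA B hB h) hc

lemma eq_of_card_eq (hC : Ctx n F χ) {A B : Finset ℕ} (hA : A ∈ F) (hB : B ∈ F)
    (h : χ A = χ B) (hc : A.card = B.card) : A = B :=
  eq_of_comp_card_eq (hC.chain A hA B hB h) hc

/-- Main witness lemma: for any non-member X there is a 4-antichain in F, one element
of each color, all incomparable with X. -/
lemma witness (hC : Ctx n F χ) {X : Finset ℕ} (hXs : X ⊆ Finset.Icc 1 n) (hX : X ∉ F) :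
    ∃ w : ℕ → Finset ℕ,
      (∀ k < 4, w k ∈ F ∧ χ (w k) = k ∧ ¬ w k ⊆ X ∧ ¬ X ⊆ w k) ∧
      (∀ k < 4, ∀ k' < 4, k ≠ k' → ¬ w k ⊆ w k') := by
  obtain ⟨S, hSsub, hScard, hSpair⟩ := hC.sat X hXs hX
  have hXS : X ∈ S := by
    by_contra hXS
    refine hC.noAC ⟨S, ?_, hScard, hSpair⟩
    intro A hA
    rcases Finset.mem_insert.mp (hSsub hA) with h | h
    · exact absurd (h ▸ hA) hXS
    · exact h
  set T := S.erase X with hT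
  have hTS : T ⊆ S := Finset.erase_subset _ _
  have hTF : T ⊆ F := by
    intro A hA
    rcases Finset.mem_insert.mp (hSsub (hTS hA)) with h | h
    · exact absurd h (Finset.ne_of_mem_erase hA)
    · exact h
  have hTcard : T.card = 4 := by rw [hT, Finset.card_erase_of_mem hXS, hScard]
  have hinj : Set.InjOn χ T := by
    intro a ha b hb hab
    by_contra hne
    rcases hC.chain a (hTF ha) b (hTF hb) hab with h | h
    · exact hSpair a (hTS ha) b (hTS hb) hne h
    · exact hSpair b (hTS hb) a (hTS ha) (Ne.symm hne) h
  have himg : T.image χ = Finset.range 4 := by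
    apply Finset.eq_of_subset_of_card_le
    · intro k hk
      simp only [Finset.mem_image] at hk
      obtain ⟨a, ha, rfl⟩ := hk
      simpa using hC.lt4 a (hTF ha)
    · rw [Finset.card_image_of_injOn hinj, hTcard, Finset.card_range]
  have hex : ∀ k : ℕ, ∃ t : Finset ℕ, k < 4 → t ∈ T ∧ χ t = k := by
    intro k
    by_cases hk : k < 4
    · have : k ∈ T.image χ := by rw [himg]; simpa using hk
      simp only [Finset.mem_image] at this
      obtain ⟨t, ht, hχt⟩ := this
      exact ⟨t, fun _ => ⟨ht, hχt⟩⟩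
    · exact ⟨∅, fun h => absurd h hk⟩
  choose w hw using hex
  refine ⟨w, ?_, ?_⟩
  · intro k hk
    obtain ⟨hwT, hwχ⟩ := hw k hk
    have hwS : w k ∈ S := hTS hwT
    have hwne : w k ≠ X := Finset.ne_of_mem_erase hwT
    exact ⟨hTF hwT, hwχ, hSpair (w k) hwS X hXS hwne, hSpair X hXS (w k) hwS (Ne.symm hwne)⟩
  · intro k hk k' hk' hne
    obtain ⟨hwT, hwχ⟩ := hw k hk
    obtain ⟨hwT', hwχ'⟩ := hw k' hk'
    have : w k ≠ w k' := by
      intro h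
      exact hne (hwχ ▸ hwχ' ▸ congrArg χ h)
    exact hSpair (w k) (hTS hwT) (w k') (hTS hwT') this

/-- If every subset of [n] were in F, we would get a 5-antichain. -/
lemma not_all (hC : Ctx n F χ) (hall : ∀ X, X ⊆ Finset.Icc 1 n → X ∈ F) : False := by
  apply hC.noAC
  refine ⟨{({1,2} : Finset ℕ), {1,3}, {1,4}, {1,5}, {2,3}}, ?_, by decide, by decide⟩
  intro A hA
  apply hall
  intro a ha
  simp only [Finset.mem_insert, Finset.mem_singleton] at hA
  have h5 : 5 ≤ n := hC.hn
  rcases hA with rfl | rfl | rfl | rfl | rfl <;>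
    · simp only [Finset.mem_insert, Finset.mem_singleton] at ha
      simp only [Finset.mem_Icc]
      omega

lemma empty_mem (hC : Ctx n F χ) : ∅ ∈ F := by
  by_contra h
  obtain ⟨S, hSsub, hScard, hSpair⟩ := hC.sat ∅ (Finset.empty_subset _) h
  have hES : (∅ : Finset ℕ) ∈ S := by
    by_contra hES
    refine hC.noAC ⟨S, ?_, hScard, hSpair⟩
    intro A hA
    rcases Finset.mem_insert.mp (hSsub hA) with h' | h'
    · exact absurd (h' ▸ hA) hES
    · exact h'
  have : (S.erase ∅).Nonempty := by
    rw [← Finset.card_pos, Finset.card_erase_of_mem hES, hScard]; omega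
  obtain ⟨B, hB⟩ := this
  exact hSpair ∅ hES B (Finset.mem_of_mem_erase hB) (Ne.symm (Finset.ne_of_mem_erase hB))
    (Finset.empty_subset B)

lemma world_mem (hC : Ctx n F χ) : Finset.Icc 1 n ∈ F := by
  by_contra h
  obtain ⟨S, hSsub, hScard, hSpair⟩ := hC.sat _ (Finset.Subset.refl _) h
  have hWS : Finset.Icc 1 n ∈ S := by
    by_contra hWS
    refine hC.noAC ⟨S, ?_, hScard, hSpair⟩
    intro A hA
    rcases Finset.mem_insert.mp (hSsub hA) with h' | h'
    · exact absurd (h' ▸ hA) hWS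
    · exact h'
  have : (S.erase (Finset.Icc 1 n)).Nonempty := by
    rw [← Finset.card_pos, Finset.card_erase_of_mem hWS, hScard]; omega
  obtain ⟨B, hB⟩ := this
  have hBF : B ∈ F := by
    rcases Finset.mem_insert.mp (hSsub (Finset.mem_of_mem_erase hB)) with h' | h'
    · exact absurd h' (Finset.ne_of_mem_erase hB)
    · exact h'
  exact hSpair B (Finset.mem_of_mem_erase hB) _ hWS (Finset.ne_of_mem_erase hB)
    (hC.sub B hBF)


lemma engine1 (hC : Ctx n F χ) (ℓ : ℕ) (hℓ1 : 1 ≤ ℓ) (hℓ2 : ℓ + 1 ≤ n - 1)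
    (d₀ : ℕ) (hd₀ : d₀ < 4)
    (miss : ∀ A ∈ F, χ A = d₀ → A.card ≠ ℓ)
    (cover : ∀ k < 4, ∃ A, A ∈ F ∧ χ A = k ∧ A.card = ℓ + 1) : False := by
  classical
  obtain ⟨U, hUF, hUχ, hUcard⟩ := cover d₀ hd₀
  have hUw : U ⊆ Finset.Icc 1 n := hC.sub U hUF
  obtain ⟨D, hDU, hDcard, hdich⟩ :
      ∃ D : Finset ℕ, D ⊆ U ∧ D.card < ℓ ∧
        ∀ B ∈ F, χ B = d₀ → B ⊆ D ∨ U ⊆ B := by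
    rcases (F.filter (fun B => χ B = d₀ ∧ B.card < ℓ)).eq_empty_or_nonempty with hP | hP
    · refine ⟨∅, Finset.empty_subset _, hℓ1, ?_⟩
      intro B hB hBχ
      right
      have hne := miss B hB hBχ
      have hnlt : ¬ B.card < ℓ := by
        intro hlt
        have hmem : B ∈ F.filter (fun B => χ B = d₀ ∧ B.card < ℓ) :=
          Finset.mem_filter.mpr ⟨hB, hBχ, hlt⟩
        rw [hP] at hmem
        exact absurd hmem (Finset.notMem_empty _)
      exact hC.sub_of_card_le hUF hB (hUχ.trans hBχ.symm) (by omega)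
    · obtain ⟨D, hDP, hDmax⟩ := Finset.exists_max_image _ Finset.card hP
      obtain ⟨hDF, hDχ, hDlt⟩ := Finset.mem_filter.mp hDP
      refine ⟨D, hC.sub_of_card_le hDF hUF (hDχ.trans hUχ.symm) (by omega), hDlt, ?_⟩
      intro B hB hBχ
      have hne := miss B hB hBχ
      by_cases hlt : B.card < ℓ
      · left
        exact hC.sub_of_card_le hB hDF (hBχ.trans hDχ.symm)
          (hDmax B (Finset.mem_filter.mpr ⟨hB, hBχ, hlt⟩))
      · right
        exact hC.sub_of_card_le hUF hB (hUχ.trans hBχ.symm) (by omega)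
  have hDw : D ⊆ Finset.Icc 1 n := hDU.trans hUw
  have hint : ∀ X : Finset ℕ, D ⊆ X → X ⊆ U → X ∈ F := by
    intro X hDX hXU
    by_contra hX
    obtain ⟨w, hw, hwp⟩ := hC.witness (hXU.trans hUw) hX
    obtain ⟨hwF, hwχ, hw1, hw2⟩ := hw d₀ hd₀
    rcases hdich _ hwF hwχ with h | h
    · exact hw1 (h.trans hDX)
    · exact hw2 (hXU.trans h)
  have hUDcard : (U \ D).card = ℓ + 1 - D.card := by
    rw [Finset.card_sdiff_of_subset hDU, hUcard]
  -- the key forcing sub-lemma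
  have forceZ : ∀ Y Q : Finset ℕ, ∀ ζ : ℕ, Y ∈ F → Y.card = ℓ → Y ⊆ U → Q ∈ F →
      χ Q = χ Y → Q.card = ℓ + 1 → insert ζ D ⊆ Q → insert ζ D ∈ F := by
    intro Y Q ζ hYF hYcard hYU hQF hQχ hQcard hsub
    by_contra hZF
    have hZw : insert ζ D ⊆ Finset.Icc 1 n := hsub.trans (hC.sub Q hQF)
    obtain ⟨w, hw, hwp⟩ := hC.witness hZw hZF
    obtain ⟨hwDF, hwDχ, hwD1, hwD2⟩ := hw d₀ hd₀
    have hUBD : U ⊆ w d₀ := by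
      rcases hdich _ hwDF hwDχ with h | h
      · exact absurd (h.trans (Finset.subset_insert ζ D)) hwD1
      · exact h
    have hYχd : χ Y ≠ d₀ := fun h => miss Y hYF h hYcard
    obtain ⟨hw1F, hw1χ, hw11, hw12⟩ := hw (χ Y) (hC.lt4 _ hYF)
    by_cases hcard : (w (χ Y)).card ≤ ℓ
    · exact hwp (χ Y) (hC.lt4 _ hYF) d₀ hd₀ hYχd
        ((hC.sub_of_card_le hw1F hYF hw1χ (by omega)).trans (hYU.trans hUBD))
    · exact hw12 (hsub.trans (hC.sub_of_card_le hQF hw1F (hQχ.trans hw1χ.symm) (by omega)))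
  by_cases hd2 : D.card = ℓ - 1
  · -- d = 2 case
    have hUD2 : (U \ D).card = 2 := by omega
    obtain ⟨x, y, hxy, hxyeq⟩ := Finset.card_eq_two.mp hUD2
    have hxUD : x ∈ U \ D := by rw [hxyeq]; simp
    have hyUD : y ∈ U \ D := by rw [hxyeq]; simp
    have hxU : x ∈ U := (Finset.mem_sdiff.mp hxUD).1
    have hxD : x ∉ D := (Finset.mem_sdiff.mp hxUD).2
    have hyU : y ∈ U := (Finset.mem_sdiff.mp hyUD).1
    have hyD : y ∉ D := (Finset.mem_sdiff.mp hyUD).2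
    have hUeq : U = insert x (insert y D) := by
      have h1 : D ∪ (U \ D) = U := Finset.union_sdiff_of_subset hDU
      rw [← h1, hxyeq, Finset.union_insert, Finset.union_comm, ← Finset.insert_eq]
    have hY1U : insert x D ⊆ U := by
      rw [hUeq]; exact Finset.insert_subset_insert x (Finset.subset_insert y D)
    have hY2U : insert y D ⊆ U := by
      rw [hUeq, Finset.insert_comm]
      exact Finset.insert_subset_insert y (Finset.subset_insert x D)
    have hY1F : insert x D ∈ F := hint _ (Finset.subset_insert _ _) hY1U
    have hY2F : insert y D ∈ F := hint _ (Finset.subset_insert _ _) hY2U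
    have hY1card : (insert x D).card = ℓ := by
      rw [Finset.card_insert_of_notMem hxD, hd2, Nat.sub_add_cancel hℓ1]
    have hY2card : (insert y D).card = ℓ := by
      rw [Finset.card_insert_of_notMem hyD, hd2, Nat.sub_add_cancel hℓ1]
    have hY1χ : χ (insert x D) ≠ d₀ := fun h => miss _ hY1F h hY1card
    have hY2χ : χ (insert y D) ≠ d₀ := fun h => miss _ hY2F h hY2card
    have hY1Y2 : insert x D ≠ insert y D :=
      ne_of_elem (Finset.mem_insert_self x D) (notMem_insert hxy hxD)
    have hY12χ : χ (insert x D) ≠ χ (insert y D) := fun h =>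
      hY1Y2 (hC.eq_of_card_eq hY1F hY2F h (hY1card.trans hY2card.symm))
    -- Q1 and z
    obtain ⟨Q1, hQ1F, hQ1χ, hQ1card⟩ := cover (χ (insert x D)) (hC.lt4 _ hY1F)
    have hY1Q1 : insert x D ⊆ Q1 := hC.sub_of_card_le hY1F hQ1F hQ1χ.symm
      (by rw [hY1card, hQ1card]; exact Nat.le_succ ℓ)
    have hQ1U : Q1 ≠ U := fun h => hY1χ (by rw [← hQ1χ, h, hUχ])
    have hQ1Y1card : (Q1 \ insert x D).card = 1 := by
      rw [Finset.card_sdiff_of_subset hY1Q1, hQ1card, hY1card]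
      exact Nat.add_sub_cancel_left ℓ 1
    obtain ⟨z, hzeq⟩ := Finset.card_eq_one.mp hQ1Y1card
    have hzmem : z ∈ Q1 \ insert x D := by rw [hzeq]; simp
    have hzQ1 : z ∈ Q1 := (Finset.mem_sdiff.mp hzmem).1
    have hzY1 : z ∉ insert x D := (Finset.mem_sdiff.mp hzmem).2
    have hzD : z ∉ D := fun h => hzY1 (Finset.mem_insert_of_mem h)
    have hzx : z ≠ x := fun h => hzY1 (h ▸ Finset.mem_insert_self x D)
    have hQ1eq : Q1 = insert z (insert x D) := by
      have h1 : insert x D ∪ (Q1 \ insert x D) = Q1 := Finset.union_sdiff_of_subset hY1Q1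
      rw [← h1, hzeq, Finset.union_comm, ← Finset.insert_eq]
    have hzy : z ≠ y := by
      intro h
      apply hQ1U
      rw [hQ1eq, h, Finset.insert_comm, ← hUeq]
    have hzU : z ∉ U := by
      rw [hUeq]
      exact notMem_insert hzx (notMem_insert hzy hzD)
    -- Z = insert z D ∈ F
    have hZQ1 : insert z D ⊆ Q1 := by
      rw [hQ1eq]
      exact Finset.insert_subset_insert z (Finset.subset_insert x D)
    have hZF : insert z D ∈ F := forceZ _ _ _ hY1F hY1card hY1U hQ1F hQ1χ hQ1card hZQ1
    have hZcard : (insert z D).card = ℓ := by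
      rw [Finset.card_insert_of_notMem hzD, hd2, Nat.sub_add_cancel hℓ1]
    have hZχd : χ (insert z D) ≠ d₀ := fun h => miss _ hZF h hZcard
    have hZχ1 : χ (insert z D) ≠ χ (insert x D) := fun h =>
      (ne_of_elem (Finset.mem_insert_self z D) (notMem_insert hzx hzD))
        (hC.eq_of_card_eq hZF hY1F h (hZcard.trans hY1card.symm))
    have hZχ2 : χ (insert z D) ≠ χ (insert y D) := fun h =>
      (ne_of_elem (Finset.mem_insert_self z D) (notMem_insert hzy hzD))
        (hC.eq_of_card_eq hZF hY2F h (hZcard.trans hY2card.symm))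
    -- Q2 and z₂, and z₂ = z
    obtain ⟨Q2, hQ2F, hQ2χ, hQ2card⟩ := cover (χ (insert y D)) (hC.lt4 _ hY2F)
    have hY2Q2 : insert y D ⊆ Q2 := hC.sub_of_card_le hY2F hQ2F hQ2χ.symm
      (by rw [hY2card, hQ2card]; exact Nat.le_succ ℓ)
    have hQ2U : Q2 ≠ U := fun h => hY2χ (by rw [← hQ2χ, h, hUχ])
    have hQ2Y2card : (Q2 \ insert y D).card = 1 := by
      rw [Finset.card_sdiff_of_subset hY2Q2, hQ2card, hY2card]
      exact Nat.add_sub_cancel_left ℓ 1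
    obtain ⟨z₂, hz₂eq⟩ := Finset.card_eq_one.mp hQ2Y2card
    have hz₂mem : z₂ ∈ Q2 \ insert y D := by rw [hz₂eq]; simp
    have hz₂Q2 : z₂ ∈ Q2 := (Finset.mem_sdiff.mp hz₂mem).1
    have hz₂Y2 : z₂ ∉ insert y D := (Finset.mem_sdiff.mp hz₂mem).2
    have hz₂D : z₂ ∉ D := fun h => hz₂Y2 (Finset.mem_insert_of_mem h)
    have hz₂y : z₂ ≠ y := fun h => hz₂Y2 (h ▸ Finset.mem_insert_self y D)
    have hQ2eq : Q2 = insert z₂ (insert y D) := by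
      have h1 : insert y D ∪ (Q2 \ insert y D) = Q2 := Finset.union_sdiff_of_subset hY2Q2
      rw [← h1, hz₂eq, Finset.union_comm, ← Finset.insert_eq]
    have hz₂x : z₂ ≠ x := by
      intro h
      apply hQ2U
      rw [hQ2eq, h, ← hUeq]
    have hZ2Q2 : insert z₂ D ⊆ Q2 := by
      rw [hQ2eq]
      exact Finset.insert_subset_insert z₂ (Finset.subset_insert y D)
    have hZ2F : insert z₂ D ∈ F := forceZ _ _ _ hY2F hY2card hY2U hQ2F hQ2χ hQ2card hZ2Q2
    have hZ2card : (insert z₂ D).card = ℓ := by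
      rw [Finset.card_insert_of_notMem hz₂D, hd2, Nat.sub_add_cancel hℓ1]
    have hz₂z : z₂ = z := by
      have hZ2χd : χ (insert z₂ D) ≠ d₀ := fun h => miss _ hZ2F h hZ2card
      have hZ2χ1 : χ (insert z₂ D) ≠ χ (insert x D) := fun h =>
        (ne_of_elem (Finset.mem_insert_self z₂ D) (notMem_insert hz₂x hz₂D))
          (hC.eq_of_card_eq hZ2F hY1F h (hZ2card.trans hY1card.symm))
      have hZ2χ2 : χ (insert z₂ D) ≠ χ (insert y D) := fun h =>
        (ne_of_elem (Finset.mem_insert_self z₂ D) (notMem_insert hz₂y hz₂D))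
          (hC.eq_of_card_eq hZ2F hY2F h (hZ2card.trans hY2card.symm))
      have hcol : χ (insert z₂ D) = χ (insert z D) :=
        four_distinct_eq (hC.lt4 _ hY1F) (hC.lt4 _ hY2F) (hC.lt4 _ hZF) hd₀
          (hC.lt4 _ hZ2F) hY12χ (Ne.symm hZχ1) (Ne.symm hZχ2) hY1χ hY2χ hZχd
          hZ2χ1 hZ2χ2 hZ2χd
      have heq : insert z₂ D = insert z D :=
        hC.eq_of_card_eq hZ2F hZF hcol (hZ2card.trans hZcard.symm)
      have : z₂ ∈ insert z D := heq ▸ Finset.mem_insert_self z₂ D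
      rcases Finset.mem_insert.mp this with h | h
      · exact h
      · exact absurd h hz₂D
    -- V3 and w₀
    obtain ⟨V3, hV3F, hV3χ, hV3card⟩ := cover (χ (insert z D)) (hC.lt4 _ hZF)
    have hZV3 : insert z D ⊆ V3 := hC.sub_of_card_le hZF hV3F hV3χ.symm
      (by rw [hZcard, hV3card]; exact Nat.le_succ ℓ)
    have hV3Zcard : (V3 \ insert z D).card = 1 := by
      rw [Finset.card_sdiff_of_subset hZV3, hV3card, hZcard]
      exact Nat.add_sub_cancel_left ℓ 1
    obtain ⟨w₀, hw₀eq⟩ := Finset.card_eq_one.mp hV3Zcard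
    have hw₀mem : w₀ ∈ V3 \ insert z D := by rw [hw₀eq]; simp
    have hw₀V3 : w₀ ∈ V3 := (Finset.mem_sdiff.mp hw₀mem).1
    have hw₀Z : w₀ ∉ insert z D := (Finset.mem_sdiff.mp hw₀mem).2
    have hw₀D : w₀ ∉ D := fun h => hw₀Z (Finset.mem_insert_of_mem h)
    have hw₀z : w₀ ≠ z := fun h => hw₀Z (h ▸ Finset.mem_insert_self z D)
    have hV3eq : V3 = insert w₀ (insert z D) := by
      have h1 : insert z D ∪ (V3 \ insert z D) = V3 := Finset.union_sdiff_of_subset hZV3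
      rw [← h1, hw₀eq, Finset.union_comm, ← Finset.insert_eq]
    have hw₀x : w₀ ≠ x := by
      intro h
      have : V3 = Q1 := by rw [hV3eq, h, Finset.insert_comm, ← hQ1eq]
      have : χ (insert z D) = χ (insert x D) := by rw [← hV3χ, this, hQ1χ]
      exact hZχ1 this
    have hw₀y : w₀ ≠ y := by
      intro h
      have : V3 = Q2 := by
        rw [hV3eq, h, Finset.insert_comm, ← hz₂z, ← hQ2eq]
      have : χ (insert z D) = χ (insert y D) := by rw [← hV3χ, this, hQ2χ]
      exact hZχ2 this
    -- final kill with X' = insert w₀ D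
    have hX'card : (insert w₀ D).card = ℓ := by
      rw [Finset.card_insert_of_notMem hw₀D, hd2, Nat.sub_add_cancel hℓ1]
    have hX'w : insert w₀ D ⊆ Finset.Icc 1 n := by
      apply Finset.insert_subset
      · exact (hC.sub V3 hV3F) hw₀V3
      · exact hDw
    have hX'F : insert w₀ D ∉ F := by
      intro hX'F
      have hd : χ (insert w₀ D) ≠ d₀ := fun h => miss _ hX'F h hX'card
      have h1 : χ (insert w₀ D) ≠ χ (insert x D) := fun h =>
        (ne_of_elem (Finset.mem_insert_self w₀ D) (notMem_insert hw₀x hw₀D))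
          (hC.eq_of_card_eq hX'F hY1F h (hX'card.trans hY1card.symm))
      have h2 : χ (insert w₀ D) ≠ χ (insert y D) := fun h =>
        (ne_of_elem (Finset.mem_insert_self w₀ D) (notMem_insert hw₀y hw₀D))
          (hC.eq_of_card_eq hX'F hY2F h (hX'card.trans hY2card.symm))
      have h3 : χ (insert w₀ D) ≠ χ (insert z D) := fun h =>
        (ne_of_elem (Finset.mem_insert_self w₀ D) (notMem_insert hw₀z hw₀D))
          (hC.eq_of_card_eq hX'F hZF h (hX'card.trans hZcard.symm))
      exact four_distinct_absurd (hC.lt4 _ hY1F) (hC.lt4 _ hY2F) (hC.lt4 _ hZF) hd₀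
        (hC.lt4 _ hX'F) hY12χ (Ne.symm hZχ1) (Ne.symm hZχ2) hY1χ hY2χ hZχd h1 h2 h3 hd
    obtain ⟨w, hw, hwp⟩ := hC.witness hX'w hX'F
    obtain ⟨hwDF, hwDχ, hwD1, hwD2⟩ := hw d₀ hd₀
    have hUBD : U ⊆ w d₀ := by
      rcases hdich _ hwDF hwDχ with h | h
      · exact absurd (h.trans (Finset.subset_insert w₀ D)) hwD1
      · exact h
    obtain ⟨hw1F, hw1χ, hw11, hw12⟩ := hw (χ (insert x D)) (hC.lt4 _ hY1F)
    have hQ1B1 : Q1 ⊆ w (χ (insert x D)) := by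
      by_cases hcard : (w (χ (insert x D))).card ≤ ℓ
      · exact absurd ((hC.sub_of_card_le hw1F hY1F hw1χ
            (by rw [hY1card]; exact hcard)).trans (hY1U.trans hUBD))
          (hwp _ (hC.lt4 _ hY1F) d₀ hd₀ hY1χ)
      · exact hC.sub_of_card_le hQ1F hw1F (hQ1χ.trans hw1χ.symm)
          (by rw [hQ1card]; exact Nat.not_le.mp hcard)
    obtain ⟨hw3F, hw3χ, hw31, hw32⟩ := hw (χ (insert z D)) (hC.lt4 _ hZF)
    by_cases hcard3 : (w (χ (insert z D))).card ≤ ℓ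
    · exact hwp (χ (insert z D)) (hC.lt4 _ hZF) (χ (insert x D)) (hC.lt4 _ hY1F) hZχ1
        ((hC.sub_of_card_le hw3F hZF hw3χ (by rw [hZcard]; exact hcard3)).trans
          (hZQ1.trans hQ1B1))
    · have hV3sub : V3 ⊆ w (χ (insert z D)) :=
        hC.sub_of_card_le hV3F hw3F (hV3χ.trans hw3χ.symm)
          (by rw [hV3card]; exact Nat.not_le.mp hcard3)
      have hXV3 : insert w₀ D ⊆ V3 := by
        rw [hV3eq]
        exact Finset.insert_subset_insert w₀ (Finset.subset_insert z D)
      exact hw32 (hXV3.trans hV3sub)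
  · -- d ≥ 3 case
    have hUD3 : 3 ≤ (U \ D).card := by omega
    obtain ⟨t3, ht3sub, ht3card⟩ := Finset.exists_subset_card_eq hUD3
    obtain ⟨α₁, α₂, α₃, h12, h13, h23, ht3eq⟩ := Finset.card_eq_three.mp ht3card
    have hmem : ∀ a ∈ ({α₁, α₂, α₃} : Finset ℕ), a ∈ U ∧ a ∉ D := by
      intro a ha
      have := ht3sub (ht3eq ▸ ha)
      exact ⟨(Finset.mem_sdiff.mp this).1, (Finset.mem_sdiff.mp this).2⟩
    have hα₁ := hmem α₁ (by simp)
    have hα₂ := hmem α₂ (by simp)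
    have hα₃ := hmem α₃ (by simp)
    -- the three sets sᵢ = insert αᵢ D
    have hsF : ∀ a : ℕ, a ∈ U → a ∉ D → insert a D ∈ F := by
      intro a haU haD
      exact hint _ (Finset.subset_insert _ _) (Finset.insert_subset haU hDU)
    have hs1F := hsF α₁ hα₁.1 hα₁.2
    have hs2F := hsF α₂ hα₂.1 hα₂.2
    have hs3F := hsF α₃ hα₃.1 hα₃.2
    have hscard : ∀ a : ℕ, a ∉ D → (insert a D).card = D.card + 1 := fun a haD =>
      Finset.card_insert_of_notMem haD
    have hsχd : ∀ a : ℕ, a ∈ U → a ∉ D → insert a D ∈ F → χ (insert a D) ≠ d₀ := by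
      intro a haU haD haF h
      rcases hdich _ haF h with hh | hh
      · exact haD (hh (Finset.mem_insert_self a D))
      · have := Finset.card_le_card hh
        rw [hUcard, hscard a haD] at this
        exact absurd (Nat.le_of_succ_le_succ this) (Nat.not_le.mpr hDcard)
    have hsne : ∀ a b : ℕ, a ≠ b → a ∉ D → insert a D ≠ insert b D := by
      intro a b hab haD
      exact ne_of_elem (Finset.mem_insert_self a D) (notMem_insert hab haD)
    have hsχne : ∀ a b : ℕ, a ≠ b → a ∉ D → b ∉ D → insert a D ∈ F → insert b D ∈ F →
        χ (insert a D) ≠ χ (insert b D) := by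
      intro a b hab haD hbD haF hbF h
      exact hsne a b hab haD (hC.eq_of_card_eq haF hbF h
        ((hscard a haD).trans (hscard b hbD).symm))
    -- T = U.erase α₁ and its color j
    have hα₁U := hα₁.1
    have hTU : U.erase α₁ ⊆ U := Finset.erase_subset _ _
    have hDT : D ⊆ U.erase α₁ := by
      intro a ha
      exact Finset.mem_erase.mpr ⟨fun h => hα₁.2 (h ▸ ha), hDU ha⟩
    have hTF : U.erase α₁ ∈ F := hint _ hDT hTU
    have hTcard : (U.erase α₁).card = ℓ := by
      rw [Finset.card_erase_of_mem hα₁U, hUcard]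
      exact Nat.add_sub_cancel ℓ 1
    have hTχd : χ (U.erase α₁) ≠ d₀ := fun h => miss _ hTF h hTcard
    obtain ⟨Q, hQF, hQχ, hQcard⟩ := cover (χ (U.erase α₁)) (hC.lt4 _ hTF)
    have hTQ : U.erase α₁ ⊆ Q := hC.sub_of_card_le hTF hQF hQχ.symm
      (by rw [hTcard, hQcard]; exact Nat.le_succ ℓ)
    have hQU : Q ≠ U := fun h => hTχd (by rw [← hQχ, h, hUχ])
    have hQnU : ¬ Q ⊆ U := by
      intro h
      exact hQU (Finset.eq_of_subset_of_card_le h (by rw [hUcard, hQcard]))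
    obtain ⟨q, hqQ, hqU⟩ := Finset.not_subset.mp hQnU
    have hqD : q ∉ D := fun h => hqU (hDU h)
    have hXcard : (insert q D).card = D.card + 1 := Finset.card_insert_of_notMem hqD
    have hXw : insert q D ⊆ Finset.Icc 1 n :=
      Finset.insert_subset ((hC.sub Q hQF) hqQ) hDw
    have hXnF : insert q D ∉ F := by
      intro hXF
      have hd : χ (insert q D) ≠ d₀ := by
        intro h
        rcases hdich _ hXF h with hh | hh
        · exact hqD (hh (Finset.mem_insert_self q D))
        · have := Finset.card_le_card hh
          rw [hUcard, hXcard] at this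
          exact absurd (Nat.le_of_succ_le_succ this) (Nat.not_le.mpr hDcard)
      have h1 : χ (insert q D) ≠ χ (insert α₁ D) :=
        hsχne q α₁ (fun h => hqU (h ▸ hα₁.1)) hqD hα₁.2 hXF hs1F
      have h2 : χ (insert q D) ≠ χ (insert α₂ D) :=
        hsχne q α₂ (fun h => hqU (h ▸ hα₂.1)) hqD hα₂.2 hXF hs2F
      have h3 : χ (insert q D) ≠ χ (insert α₃ D) :=
        hsχne q α₃ (fun h => hqU (h ▸ hα₃.1)) hqD hα₃.2 hXF hs3F
      have d1 : χ (insert α₁ D) ≠ χ (insert α₂ D) := hsχne _ _ h12 hα₁.2 hα₂.2 hs1F hs2F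
      have d2 : χ (insert α₁ D) ≠ χ (insert α₃ D) := hsχne _ _ h13 hα₁.2 hα₃.2 hs1F hs3F
      have d3 : χ (insert α₂ D) ≠ χ (insert α₃ D) := hsχne _ _ h23 hα₂.2 hα₃.2 hs2F hs3F
      have c1 : χ (insert α₁ D) ≠ d₀ := hsχd _ hα₁.1 hα₁.2 hs1F
      have c2 : χ (insert α₂ D) ≠ d₀ := hsχd _ hα₂.1 hα₂.2 hs2F
      have c3 : χ (insert α₃ D) ≠ d₀ := hsχd _ hα₃.1 hα₃.2 hs3F
      exact four_distinct_absurd (hC.lt4 _ hs1F) (hC.lt4 _ hs2F) (hC.lt4 _ hs3F) hd₀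
        (hC.lt4 _ hXF) d1 d2 d3 c1 c2 c3 h1 h2 h3 hd
    obtain ⟨w, hw, hwp⟩ := hC.witness hXw hXnF
    obtain ⟨hwDF, hwDχ, hwD1, hwD2⟩ := hw d₀ hd₀
    have hUBD : U ⊆ w d₀ := by
      rcases hdich _ hwDF hwDχ with h | h
      · exact absurd (h.trans (Finset.subset_insert q D)) hwD1
      · exact h
    obtain ⟨hwjF, hwjχ, hwj1, hwj2⟩ := hw (χ (U.erase α₁)) (hC.lt4 _ hTF)
    by_cases hcard : (w (χ (U.erase α₁))).card ≤ ℓ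
    · exact hwp _ (hC.lt4 _ hTF) d₀ hd₀ hTχd
        ((hC.sub_of_card_le hwjF hTF hwjχ (by rw [hTcard]; exact hcard)).trans
          (hTU.trans hUBD))
    · have hQsub : Q ⊆ w (χ (U.erase α₁)) :=
        hC.sub_of_card_le hQF hwjF (hQχ.trans hwjχ.symm)
          (by rw [hQcard]; exact Nat.not_le.mp hcard)
      have hXQ : insert q D ⊆ Q := Finset.insert_subset hqQ (hDT.trans hTQ)
      exact hwj2 (hXQ.trans hQsub)


lemma engine2 (hC : Ctx n F χ) (d₀ : ℕ) (hd₀ : d₀ < 4)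
    (miss : ∀ A ∈ F, χ A = d₀ → A.card ≠ 1) : False := by
  classical
  rcases (F.filter (fun B => χ B = d₀ ∧ 2 ≤ B.card)).eq_empty_or_nonempty with hP | hP
  · have hz : ∀ B ∈ F, χ B = d₀ → B = ∅ := by
      intro B hB hχ
      have h1 := miss B hB hχ
      have h2 : ¬ 2 ≤ B.card := by
        intro h
        have hmem : B ∈ F.filter (fun B => χ B = d₀ ∧ 2 ≤ B.card) :=
          Finset.mem_filter.mpr ⟨hB, hχ, h⟩
        rw [hP] at hmem
        exact absurd hmem (Finset.notMem_empty _)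
      exact Finset.card_eq_zero.mp (by omega)
    apply hC.not_all
    intro X hXw
    by_contra hX
    obtain ⟨w, hw, hwp⟩ := hC.witness hXw hX
    obtain ⟨hwF, hwχ, hw1, hw2⟩ := hw d₀ hd₀
    rw [hz _ hwF hwχ] at hw1
    exact hw1 (Finset.empty_subset X)
  · obtain ⟨U, hUP, hUmin⟩ := Finset.exists_min_image _ Finset.card hP
    obtain ⟨hUF, hUχ, hU2⟩ := Finset.mem_filter.mp hUP
    have hUw : U ⊆ Finset.Icc 1 n := hC.sub U hUF
    have hdich : ∀ B ∈ F, χ B = d₀ → B = ∅ ∨ U ⊆ B := by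
      intro B hB hχ
      by_cases h2 : 2 ≤ B.card
      · exact Or.inr (hC.sub_of_card_le hUF hB (hUχ.trans hχ.symm)
          (hUmin B (Finset.mem_filter.mpr ⟨hB, hχ, h2⟩)))
      · have h1 := miss B hB hχ
        exact Or.inl (Finset.card_eq_zero.mp (by omega))
    have hint : ∀ X : Finset ℕ, X ⊆ U → X ∈ F := by
      intro X hXU
      by_contra hX
      obtain ⟨w, hw, hwp⟩ := hC.witness (hXU.trans hUw) hX
      obtain ⟨hwF, hwχ, hw1, hw2⟩ := hw d₀ hd₀
      rcases hdich _ hwF hwχ with h | h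
      · rw [h] at hw1
        exact hw1 (Finset.empty_subset X)
      · exact hw2 (hXU.trans h)
    by_cases hU4 : 4 ≤ U.card
    · have h26 : (4:ℕ).choose 2 = 6 := by decide
      have hch : (5:ℕ) ≤ (U.powersetCard 2).card := by
        rw [Finset.card_powersetCard]
        have h1 : (4:ℕ).choose 2 ≤ U.card.choose 2 := Nat.choose_le_choose 2 hU4
        omega
      obtain ⟨S, hSsub, hScard⟩ := Finset.exists_subset_card_eq hch
      apply hC.noAC
      refine ⟨S, ?_, hScard, ?_⟩
      · intro A hA
        have h := Finset.mem_powersetCard.mp (hSsub hA)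
        exact hint A h.1
      · intro A hA B hB hne
        have h1 := Finset.mem_powersetCard.mp (hSsub hA)
        have h2 := Finset.mem_powersetCard.mp (hSsub hB)
        exact not_subset_of_card_eq (h1.2.trans h2.2.symm) hne
    · have hsingF : ∀ a ∈ U, ({a} : Finset ℕ) ∈ F := fun a ha =>
        hint {a} (Finset.singleton_subset_iff.mpr ha)
      have hsingχd : ∀ a ∈ U, χ ({a} : Finset ℕ) ≠ d₀ := by
        intro a ha h
        rcases hdich _ (hsingF a ha) h with h' | h'
        · exact (Finset.singleton_ne_empty a) h'
        · have := Finset.card_le_card h'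
          rw [Finset.card_singleton] at this
          omega
      have hsingχne : ∀ a ∈ U, ∀ b ∈ U, a ≠ b → χ ({a} : Finset ℕ) ≠ χ {b} := by
        intro a ha b hb hab h
        have heq : ({a} : Finset ℕ) = {b} :=
          hC.eq_of_card_eq (hsingF a ha) (hsingF b hb) h (by simp)
        exact hab (Finset.singleton_inj.mp heq)
      have hU23 : U.card = 2 ∨ U.card = 3 := by omega
      rcases hU23 with hU3 | hU3
      · -- |U| = 2 : the main braid
        obtain ⟨x, y, hxy, hUeq⟩ := Finset.card_eq_two.mp hU3
        have hxU : x ∈ U := by rw [hUeq]; simp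
        have hyU : y ∈ U := by rw [hUeq]; simp
        -- derive successor data for a singleton
        have deriveQ : ∀ a ∈ U, ∃ Q : Finset ℕ, Q ∈ F ∧ χ Q = χ ({a} : Finset ℕ) ∧
            ({a} : Finset ℕ) ⊂ Q ∧
            ∀ B ∈ F, χ B = χ ({a} : Finset ℕ) → B ⊆ {a} ∨ Q ⊆ B := by
          intro a ha
          have haF := hsingF a ha
          rcases (F.filter (fun B => χ B = χ ({a} : Finset ℕ) ∧
              ({a} : Finset ℕ) ⊂ B)).eq_empty_or_nonempty with hPQ | hPQ
          · exfalso
            have hsub : ∀ B ∈ F, χ B = χ ({a} : Finset ℕ) → B ⊆ {a} := by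
              intro B hB hχ
              rcases hC.chain B hB _ haF hχ with h | h
              · exact h
              · by_cases he : ({a} : Finset ℕ) = B
                · rw [← he]
                · exfalso
                  have hmem : B ∈ F.filter (fun B => χ B = χ ({a} : Finset ℕ) ∧
                      ({a} : Finset ℕ) ⊂ B) :=
                    Finset.mem_filter.mpr ⟨hB, hχ, Finset.ssubset_iff_subset_ne.mpr ⟨h, he⟩⟩
                  rw [hPQ] at hmem
                  exact absurd hmem (Finset.notMem_empty _)
            apply hC.not_all
            intro X hXw
            by_contra hX
            obtain ⟨w, hw, hwp⟩ := hC.witness hXw hX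
            obtain ⟨hwDF, hwDχ, hwD1, hwD2⟩ := hw d₀ hd₀
            have hUBD : U ⊆ w d₀ := by
              rcases hdich _ hwDF hwDχ with h | h
              · rw [h] at hwD1
                exact absurd (Finset.empty_subset X) hwD1
              · exact h
            obtain ⟨hwjF, hwjχ, hwj1, hwj2⟩ := hw (χ ({a} : Finset ℕ)) (hC.lt4 _ haF)
            exact hwp _ (hC.lt4 _ haF) d₀ hd₀ (hsingχd a ha)
              ((hsub _ hwjF hwjχ).trans ((Finset.singleton_subset_iff.mpr ha).trans hUBD))
          · obtain ⟨Q, hQP, hQmin⟩ := Finset.exists_min_image _ Finset.card hPQ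
            obtain ⟨hQF, hQχ, hssQ⟩ := Finset.mem_filter.mp hQP
            refine ⟨Q, hQF, hQχ, hssQ, ?_⟩
            intro B hB hχ
            rcases hC.chain B hB _ haF hχ with h | h
            · exact Or.inl h
            · by_cases he : ({a} : Finset ℕ) = B
              · exact Or.inl (by rw [← he])
              · exact Or.inr (hC.sub_of_card_le hQF hB (hQχ.trans hχ.symm)
                  (hQmin B (Finset.mem_filter.mpr ⟨hB, hχ,
                    Finset.ssubset_iff_subset_ne.mpr ⟨h, he⟩⟩)))
        obtain ⟨Q1, hQ1F, hQ1χ, hQ1ss, hdich1⟩ := deriveQ x hxU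
        obtain ⟨Q2, hQ2F, hQ2χ, hQ2ss, hdich2⟩ := deriveQ y hyU
        have hxQ1 : x ∈ Q1 := hQ1ss.1 (Finset.mem_singleton_self x)
        have hyQ2 : y ∈ Q2 := hQ2ss.1 (Finset.mem_singleton_self y)
        -- forced singletons
        have forceSing : ∀ a ∈ U, ∀ Q : Finset ℕ, Q ∈ F → χ Q = χ ({a} : Finset ℕ) →
            (∀ B ∈ F, χ B = χ ({a} : Finset ℕ) → B ⊆ {a} ∨ Q ⊆ B) →
            ∀ q ∈ Q, ({q} : Finset ℕ) ∈ F := by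
          intro a ha Q hQF hQχ hdicha q hqQ
          by_contra hqF
          have hqw : q ∈ Finset.Icc 1 n := (hC.sub Q hQF) hqQ
          obtain ⟨w, hw, hwp⟩ := hC.witness (Finset.singleton_subset_iff.mpr hqw) hqF
          obtain ⟨hwDF, hwDχ, hwD1, hwD2⟩ := hw d₀ hd₀
          have hUBD : U ⊆ w d₀ := by
            rcases hdich _ hwDF hwDχ with h | h
            · rw [h] at hwD1
              exact absurd (Finset.empty_subset _) hwD1
            · exact h
          obtain ⟨hwjF, hwjχ, hwj1, hwj2⟩ := hw (χ ({a} : Finset ℕ)) (hC.lt4 _ (hsingF a ha))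
          rcases hdicha _ hwjF hwjχ with h | h
          · exact hwp _ (hC.lt4 _ (hsingF a ha)) d₀ hd₀ (hsingχd a ha)
              (h.trans ((Finset.singleton_subset_iff.mpr ha).trans hUBD))
          · exact hwj2 (Finset.singleton_subset_iff.mpr (h hqQ))
        have singq : ∀ q : ℕ, q ∉ U → ({q} : Finset ℕ) ∈ F →
            χ ({q} : Finset ℕ) ≠ d₀ ∧ ∀ a ∈ U, χ ({q} : Finset ℕ) ≠ χ {a} := by
          intro q hqU hqF
          constructor
          · intro h
            rcases hdich _ hqF h with h' | h'
            · exact (Finset.singleton_ne_empty q) h'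
            · have := Finset.card_le_card h'
              rw [Finset.card_singleton] at this
              omega
          · intro a ha h
            have heq : ({q} : Finset ℕ) = {a} :=
              hC.eq_of_card_eq hqF (hsingF a ha) h (by simp)
            exact hqU (by rw [Finset.singleton_inj.mp heq]; exact ha)
        have hQ1nU : ¬ Q1 ⊆ U := by
          intro h
          have h1 : ({x} : Finset ℕ).card < Q1.card := Finset.card_lt_card hQ1ss
          rw [Finset.card_singleton] at h1
          have h2 : Q1 = U := Finset.eq_of_subset_of_card_le h (by rw [hU3]; omega)
          exact hsingχd x hxU (by rw [← hQ1χ, h2, hUχ])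
        obtain ⟨z, hzQ1, hzU⟩ := Finset.not_subset.mp hQ1nU
        have hzF : ({z} : Finset ℕ) ∈ F := forceSing x hxU Q1 hQ1F hQ1χ hdich1 z hzQ1
        obtain ⟨hzχd, hzχU⟩ := singq z hzU hzF
        have hχ12 : χ ({x} : Finset ℕ) ≠ χ ({y} : Finset ℕ) := hsingχne x hxU y hyU hxy
        have huniq : ∀ q : ℕ, q ∉ U → ({q} : Finset ℕ) ∈ F → q = z := by
          intro q hqU hqF
          obtain ⟨hqχd, hqχU⟩ := singq q hqU hqF
          have hcol : χ ({q} : Finset ℕ) = χ ({z} : Finset ℕ) :=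
            four_distinct_eq (hC.lt4 _ (hsingF x hxU)) (hC.lt4 _ (hsingF y hyU))
              (hC.lt4 _ hzF) hd₀ (hC.lt4 _ hqF)
              hχ12 (Ne.symm (hzχU x hxU)) (Ne.symm (hzχU y hyU))
              (hsingχd x hxU) (hsingχd y hyU) hzχd
              (hqχU x hxU) (hqχU y hyU) hqχd
          exact Finset.singleton_inj.mp (hC.eq_of_card_eq hqF hzF hcol (by simp))
        have hQ1sub : Q1 ⊆ insert z U := by
          intro a haQ
          by_cases haU : a ∈ U
          · exact Finset.mem_insert_of_mem haU
          · have haF := forceSing x hxU Q1 hQ1F hQ1χ hdich1 a haQ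
            rw [huniq a haU haF]
            exact Finset.mem_insert_self z U
        have hQ2sub : Q2 ⊆ insert z U := by
          intro a haQ
          by_cases haU : a ∈ U
          · exact Finset.mem_insert_of_mem haU
          · have haF := forceSing y hyU Q2 hQ2F hQ2χ hdich2 a haQ
            rw [huniq a haU haF]
            exact Finset.mem_insert_self z U
        have hzw : z ∈ Finset.Icc 1 n := (hC.sub Q1 hQ1F) hzQ1
        have hZUcard : (insert z U).card = 3 := by
          rw [Finset.card_insert_of_notMem hzU, hU3]
        have hnw3 : ¬ Finset.Icc 1 n ⊆ insert z U := by
          intro h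
          have h1 := Finset.card_le_card h
          rw [Nat.card_Icc, hZUcard] at h1
          have h5 := hC.hn
          omega
        -- case B as a reusable lemma
        have caseB : ∀ a b : ℕ, a ∈ U → b ∈ U → a ≠ b →
            ∀ Q : Finset ℕ, Q ∈ F → χ Q = χ ({a} : Finset ℕ) → ({a} : Finset ℕ) ⊂ Q →
            (∀ B ∈ F, χ B = χ ({a} : Finset ℕ) → B ⊆ {a} ∨ Q ⊆ B) →
            Q ⊆ insert z U → b ∈ Q → False := by
          intro a b ha hb hab Q hQF hQχ hQss hdicha hQsub hbQ
          have haF := hsingF a ha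
          have haQ : a ∈ Q := hQss.1 (Finset.mem_singleton_self a)
          have hQnU : ¬ Q ⊆ U := by
            intro h
            have h1 : ({a} : Finset ℕ).card < Q.card := Finset.card_lt_card hQss
            rw [Finset.card_singleton] at h1
            have h2 : Q = U := Finset.eq_of_subset_of_card_le h (by rw [hU3]; omega)
            exact hsingχd a ha (by rw [← hQχ, h2, hUχ])
          obtain ⟨q0, hq0Q, hq0U⟩ := Finset.not_subset.mp hQnU
          have hzQ : z ∈ Q := by
            rw [← huniq q0 hq0U (forceSing a ha Q hQF hQχ hdicha q0 hq0Q)]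
            exact hq0Q
          have hUab : ({a, b} : Finset ℕ) = U := by
            apply Finset.eq_of_subset_of_card_le
              (Finset.insert_subset ha (Finset.singleton_subset_iff.mpr hb))
            rw [hU3, Finset.card_insert_of_notMem (Finset.notMem_singleton.mpr hab),
              Finset.card_singleton]
          have hUQ : U ⊆ Q := by
            rw [← hUab]
            exact Finset.insert_subset haQ (Finset.singleton_subset_iff.mpr hbQ)
          have hQeq : Q = insert z U :=
            Finset.Subset.antisymm hQsub (Finset.insert_subset hzQ hUQ)
          have hQcard3 : Q.card = 3 := by rw [hQeq, hZUcard]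
          have haw : a ∈ Finset.Icc 1 n := hUw ha
          have hza : z ≠ a := fun h => hzU (h ▸ ha)
          have hzb : z ≠ b := fun h => hzU (h ▸ hb)
          have hazF : ({a, z} : Finset ℕ) ∈ F := by
            by_contra hazF
            obtain ⟨w, hw, hwp⟩ := hC.witness (X := ({a, z} : Finset ℕ))
              (Finset.insert_subset haw (Finset.singleton_subset_iff.mpr hzw)) hazF
            obtain ⟨hw1F, hw1χ, hw11, hw12⟩ := hw (χ ({a} : Finset ℕ)) (hC.lt4 _ haF)
            rcases hdicha _ hw1F hw1χ with h | h
            · exact hw11 (h.trans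
                (Finset.singleton_subset_iff.mpr (Finset.mem_insert_self a {z})))
            · exact hw12 ((Finset.insert_subset haQ
                (Finset.singleton_subset_iff.mpr hzQ)).trans h)
          have hazcard : ({a, z} : Finset ℕ).card = 2 := by
            rw [Finset.card_insert_of_notMem (Finset.notMem_singleton.mpr (Ne.symm hza)),
              Finset.card_singleton]
          have hazχd : χ ({a, z} : Finset ℕ) ≠ d₀ := by
            intro h
            rcases hdich _ hazF h with h' | h'
            · exact (Finset.insert_ne_empty a {z}) h'
            · have hbm := h' hb
              rcases Finset.mem_insert.mp hbm with h'' | h''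
              · exact hab h''.symm
              · rw [Finset.mem_singleton] at h''
                exact hzb h''.symm
          have hazχa : χ ({a, z} : Finset ℕ) ≠ χ ({a} : Finset ℕ) := by
            intro h
            rcases hdicha _ hazF h with h' | h'
            · have hzm := h' (Finset.mem_insert_of_mem (Finset.mem_singleton_self z))
              rw [Finset.mem_singleton] at hzm
              exact hza hzm
            · have hle := Finset.card_le_card h'
              rw [hQcard3, hazcard] at hle
              omega
          have hazχb : χ ({a, z} : Finset ℕ) ≠ χ ({b} : Finset ℕ) := by
            intro h
            rcases hC.chain _ hazF _ (hsingF b hb) h with h' | h'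
            · have hle := Finset.card_le_card h'
              rw [hazcard, Finset.card_singleton] at hle
              omega
            · have hbm := h' (Finset.mem_singleton_self b)
              rcases Finset.mem_insert.mp hbm with h'' | h''
              · exact hab h''.symm
              · rw [Finset.mem_singleton] at h''
                exact hzb h''.symm
          have hazχz : χ ({a, z} : Finset ℕ) = χ ({z} : Finset ℕ) :=
            four_distinct_eq (hC.lt4 _ haF) (hC.lt4 _ (hsingF b hb)) (hC.lt4 _ hzF) hd₀
              (hC.lt4 _ hazF) (hsingχne a ha b hb hab) (Ne.symm (hzχU a ha))
              (Ne.symm (hzχU b hb)) (hsingχd a ha) (hsingχd b hb) hzχd hazχa hazχb hazχd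
          have key : ∃ q : ℕ, q ∈ Finset.Icc 1 n ∧ q ∉ Q ∧ ({a, q} : Finset ℕ) ∈ F := by
            rcases (F.filter (fun B => χ B = d₀ ∧ U ⊂ B)).eq_empty_or_nonempty with hPS | hPS
            · have hnwQ : ¬ Finset.Icc 1 n ⊆ Q := by
                rw [hQeq]; exact hnw3
              obtain ⟨q, hqw, hqQ⟩ := Finset.not_subset.mp hnwQ
              refine ⟨q, hqw, hqQ, ?_⟩
              by_contra haqF
              obtain ⟨w, hw, hwp⟩ := hC.witness (X := ({a, q} : Finset ℕ))
                (Finset.insert_subset haw (Finset.singleton_subset_iff.mpr hqw)) haqF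
              obtain ⟨hw1F, hw1χ, hw11, hw12⟩ := hw (χ ({a} : Finset ℕ)) (hC.lt4 _ haF)
              have hQB1 : Q ⊆ w (χ ({a} : Finset ℕ)) := by
                rcases hdicha _ hw1F hw1χ with h | h
                · exact absurd (h.trans
                    (Finset.singleton_subset_iff.mpr (Finset.mem_insert_self a {q}))) hw11
                · exact h
              obtain ⟨hwDF, hwDχ, hwD1, hwD2⟩ := hw d₀ hd₀
              rcases hdich _ hwDF hwDχ with h | h
              · rw [h] at hwD1
                exact hwD1 (Finset.empty_subset _)
              · by_cases he : U = w d₀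
                · refine hwp d₀ hd₀ _ (hC.lt4 _ haF) (Ne.symm (hsingχd a ha)) ?_
                  rw [← he]
                  exact hUQ.trans hQB1
                · have hmem : w d₀ ∈ F.filter (fun B => χ B = d₀ ∧ U ⊂ B) :=
                    Finset.mem_filter.mpr ⟨hwDF, hwDχ,
                      Finset.ssubset_iff_subset_ne.mpr ⟨h, he⟩⟩
                  rw [hPS] at hmem
                  exact absurd hmem (Finset.notMem_empty _)
            · obtain ⟨SD, hSDP, hSDmin⟩ := Finset.exists_min_image _ Finset.card hPS
              obtain ⟨hSDF, hSDχ, hUSD⟩ := Finset.mem_filter.mp hSDP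
              have hdichS : ∀ B ∈ F, χ B = d₀ → B = ∅ ∨ B = U ∨ SD ⊆ B := by
                intro B hB hχ
                rcases hdich B hB hχ with h | h
                · exact Or.inl h
                · by_cases he : U = B
                  · exact Or.inr (Or.inl he.symm)
                  · exact Or.inr (Or.inr (hC.sub_of_card_le hSDF hB (hSDχ.trans hχ.symm)
                      (hSDmin B (Finset.mem_filter.mpr ⟨hB, hχ,
                        Finset.ssubset_iff_subset_ne.mpr ⟨h, he⟩⟩))))
              have hSDnQ : ¬ SD ⊆ Q := by
                intro h
                have h1 : U.card < SD.card := Finset.card_lt_card hUSD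
                rw [hU3] at h1
                have h2 : SD = Q := Finset.eq_of_subset_of_card_le h (by rw [hQcard3]; omega)
                exact (hsingχd a ha) (by rw [← hQχ, ← h2, hSDχ])
              obtain ⟨q, hqSD, hqQ⟩ := Finset.not_subset.mp hSDnQ
              have hqw : q ∈ Finset.Icc 1 n := (hC.sub SD hSDF) hqSD
              refine ⟨q, hqw, hqQ, ?_⟩
              by_contra haqF
              obtain ⟨w, hw, hwp⟩ := hC.witness (X := ({a, q} : Finset ℕ))
                (Finset.insert_subset haw (Finset.singleton_subset_iff.mpr hqw)) haqF
              obtain ⟨hw1F, hw1χ, hw11, hw12⟩ := hw (χ ({a} : Finset ℕ)) (hC.lt4 _ haF)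
              have hQB1 : Q ⊆ w (χ ({a} : Finset ℕ)) := by
                rcases hdicha _ hw1F hw1χ with h | h
                · exact absurd (h.trans
                    (Finset.singleton_subset_iff.mpr (Finset.mem_insert_self a {q}))) hw11
                · exact h
              obtain ⟨hwDF, hwDχ, hwD1, hwD2⟩ := hw d₀ hd₀
              rcases hdichS _ hwDF hwDχ with h | h | h
              · rw [h] at hwD1
                exact hwD1 (Finset.empty_subset _)
              · refine hwp d₀ hd₀ _ (hC.lt4 _ haF) (Ne.symm (hsingχd a ha)) ?_
                rw [h]
                exact hUQ.trans hQB1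
              · exact hwD2 ((Finset.insert_subset (hUSD.1 ha)
                  (Finset.singleton_subset_iff.mpr hqSD)).trans h)
          obtain ⟨q, hqw, hqQ, haqF⟩ := key
          have hqU : q ∉ U := fun h => hqQ (hUQ h)
          have hqa : q ≠ a := fun h => hqQ (h ▸ haQ)
          have hqz : q ≠ z := fun h => hqQ (h ▸ hzQ)
          have hqb : q ≠ b := fun h => hqU (h ▸ hb)
          have haqcard : ({a, q} : Finset ℕ).card = 2 := by
            rw [Finset.card_insert_of_notMem (Finset.notMem_singleton.mpr (Ne.symm hqa)),
              Finset.card_singleton]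
          have haqχa : χ ({a, q} : Finset ℕ) ≠ χ ({a} : Finset ℕ) := by
            intro h
            rcases hdicha _ haqF h with h' | h'
            · have hqm := h' (Finset.mem_insert_of_mem (Finset.mem_singleton_self q))
              rw [Finset.mem_singleton] at hqm
              exact hqa hqm
            · have hle := Finset.card_le_card h'
              rw [hQcard3, haqcard] at hle
              omega
          have haqχb : χ ({a, q} : Finset ℕ) ≠ χ ({b} : Finset ℕ) := by
            intro h
            rcases hC.chain _ haqF _ (hsingF b hb) h with h' | h'
            · have hle := Finset.card_le_card h'
              rw [haqcard, Finset.card_singleton] at hle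
              omega
            · have hbm := h' (Finset.mem_singleton_self b)
              rcases Finset.mem_insert.mp hbm with h'' | h''
              · exact hab h''.symm
              · rw [Finset.mem_singleton] at h''
                exact hqb h''.symm
          have haqχd : χ ({a, q} : Finset ℕ) ≠ d₀ := by
            intro h
            rcases hdich _ haqF h with h' | h'
            · exact (Finset.insert_ne_empty a {q}) h'
            · have hbm := h' hb
              rcases Finset.mem_insert.mp hbm with h'' | h''
              · exact hab h''.symm
              · rw [Finset.mem_singleton] at h''
                exact hqb h''.symm
          have haqχz : χ ({a, q} : Finset ℕ) ≠ χ ({z} : Finset ℕ) := by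
            intro h
            have hcol : χ ({a, q} : Finset ℕ) = χ ({a, z} : Finset ℕ) := by
              rw [h, ← hazχz]
            rcases hC.chain _ haqF _ hazF hcol with h' | h'
            · have hqm := h' (Finset.mem_insert_of_mem (Finset.mem_singleton_self q))
              rcases Finset.mem_insert.mp hqm with h'' | h''
              · exact hqa h''
              · rw [Finset.mem_singleton] at h''
                exact hqz h''
            · have hzm := h' (Finset.mem_insert_of_mem (Finset.mem_singleton_self z))
              rcases Finset.mem_insert.mp hzm with h'' | h''
              · exact hza h''
              · rw [Finset.mem_singleton] at h''
                exact hqz h''.symm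
          exact four_distinct_absurd (hC.lt4 _ haF) (hC.lt4 _ (hsingF b hb)) (hC.lt4 _ hzF)
            hd₀ (hC.lt4 _ haqF) (hsingχne a ha b hb hab) (Ne.symm (hzχU a ha))
            (Ne.symm (hzχU b hb)) (hsingχd a ha) (hsingχd b hb) hzχd haqχa haqχb haqχz haqχd
        by_cases hyQ1 : y ∈ Q1
        · exact caseB x y hxU hyU hxy Q1 hQ1F hQ1χ hQ1ss hdich1 hQ1sub hyQ1
        · by_cases hxQ2 : x ∈ Q2
          · exact caseB y x hyU hxU (Ne.symm hxy) Q2 hQ2F hQ2χ hQ2ss hdich2 hQ2sub hxQ2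
          · -- CASE A
            have hxz : x ≠ z := fun h => hzU (h ▸ hxU)
            have hyz' : y ≠ z := fun h => hzU (h ▸ hyU)
            have hQ1eq : Q1 = ({x, z} : Finset ℕ) := by
              apply Finset.Subset.antisymm
              · intro c hc
                rcases Finset.mem_insert.mp (hQ1sub hc) with h | h
                · rw [h]
                  exact Finset.mem_insert_of_mem (Finset.mem_singleton_self z)
                · rw [hUeq] at h
                  rcases Finset.mem_insert.mp h with h' | h'
                  · rw [h']
                    exact Finset.mem_insert_self x {z}
                  · rw [Finset.mem_singleton] at h'
                    exact absurd (h' ▸ hc) hyQ1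
              · exact Finset.insert_subset hxQ1 (Finset.singleton_subset_iff.mpr hzQ1)
            have hQ1card : Q1.card = 2 := by
              rw [hQ1eq, Finset.card_insert_of_notMem (Finset.notMem_singleton.mpr hxz),
                Finset.card_singleton]
            have hQ2nU : ¬ Q2 ⊆ U := by
              intro h
              have h1 : ({y} : Finset ℕ).card < Q2.card := Finset.card_lt_card hQ2ss
              rw [Finset.card_singleton] at h1
              have h2 : Q2 = U := Finset.eq_of_subset_of_card_le h (by rw [hU3]; omega)
              exact hsingχd y hyU (by rw [← hQ2χ, h2, hUχ])
            obtain ⟨q0, hq0Q, hq0U⟩ := Finset.not_subset.mp hQ2nU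
            have hzQ2 : z ∈ Q2 := by
              rw [← huniq q0 hq0U (forceSing y hyU Q2 hQ2F hQ2χ hdich2 q0 hq0Q)]
              exact hq0Q
            have hQ2eq : Q2 = ({y, z} : Finset ℕ) := by
              apply Finset.Subset.antisymm
              · intro c hc
                rcases Finset.mem_insert.mp (hQ2sub hc) with h | h
                · rw [h]
                  exact Finset.mem_insert_of_mem (Finset.mem_singleton_self z)
                · rw [hUeq] at h
                  rcases Finset.mem_insert.mp h with h' | h'
                  · exact absurd (h' ▸ hc) hxQ2
                  · rw [Finset.mem_singleton] at h'
                    rw [h']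
                    exact Finset.mem_insert_self y {z}
              · exact Finset.insert_subset hyQ2 (Finset.singleton_subset_iff.mpr hzQ2)
            have hQ2card : Q2.card = 2 := by
              rw [hQ2eq, Finset.card_insert_of_notMem (Finset.notMem_singleton.mpr hyz'),
                Finset.card_singleton]
            rcases (F.filter (fun B => χ B = χ ({z} : Finset ℕ) ∧
                ({z} : Finset ℕ) ⊂ B)).eq_empty_or_nonempty with hP3 | hP3
            · -- no successor of {z}
              have hsub3 : ∀ B ∈ F, χ B = χ ({z} : Finset ℕ) → B ⊆ {z} := by
                intro B hB hχ
                rcases hC.chain B hB _ hzF hχ with h | h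
                · exact h
                · by_cases he : ({z} : Finset ℕ) = B
                  · rw [← he]
                  · exfalso
                    have hmem : B ∈ F.filter (fun B => χ B = χ ({z} : Finset ℕ) ∧
                        ({z} : Finset ℕ) ⊂ B) :=
                      Finset.mem_filter.mpr ⟨hB, hχ,
                        Finset.ssubset_iff_subset_ne.mpr ⟨h, he⟩⟩
                    rw [hP3] at hmem
                    exact absurd hmem (Finset.notMem_empty _)
              obtain ⟨w₀, hw₀w, hw₀ZU⟩ := Finset.not_subset.mp hnw3
              have hw₀z : w₀ ≠ z := fun h => hw₀ZU (h ▸ Finset.mem_insert_self z U)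
              have hw₀U : w₀ ∉ U := fun h => hw₀ZU (Finset.mem_insert_of_mem h)
              have hw₀x : w₀ ≠ x := fun h => hw₀U (h ▸ hxU)
              have hw₀y : w₀ ≠ y := fun h => hw₀U (h ▸ hyU)
              have hzwF : ({z, w₀} : Finset ℕ) ∈ F := by
                by_contra hzw₀
                obtain ⟨w, hw, hwp⟩ := hC.witness (X := ({z, w₀} : Finset ℕ))
                  (Finset.insert_subset hzw (Finset.singleton_subset_iff.mpr hw₀w)) hzw₀
                obtain ⟨hw3F, hw3χ, hw31, hw32⟩ := hw (χ ({z} : Finset ℕ)) (hC.lt4 _ hzF)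
                exact hw31 ((hsub3 _ hw3F hw3χ).trans
                  (Finset.singleton_subset_iff.mpr (Finset.mem_insert_self z {w₀})))
              have hzwcard : ({z, w₀} : Finset ℕ).card = 2 := by
                rw [Finset.card_insert_of_notMem
                  (Finset.notMem_singleton.mpr (Ne.symm hw₀z)), Finset.card_singleton]
              have hzwχx : χ ({z, w₀} : Finset ℕ) ≠ χ ({x} : Finset ℕ) := by
                intro h
                rcases hC.chain _ hzwF _ (hsingF x hxU) h with h' | h'
                · have hle := Finset.card_le_card h'
                  rw [hzwcard, Finset.card_singleton] at hle
                  omega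
                · have hxm := h' (Finset.mem_singleton_self x)
                  rcases Finset.mem_insert.mp hxm with h'' | h''
                  · exact hxz h''
                  · rw [Finset.mem_singleton] at h''
                    exact hw₀x h''.symm
              have hzwχy : χ ({z, w₀} : Finset ℕ) ≠ χ ({y} : Finset ℕ) := by
                intro h
                rcases hC.chain _ hzwF _ (hsingF y hyU) h with h' | h'
                · have hle := Finset.card_le_card h'
                  rw [hzwcard, Finset.card_singleton] at hle
                  omega
                · have hym := h' (Finset.mem_singleton_self y)
                  rcases Finset.mem_insert.mp hym with h'' | h''
                  · exact hyz' h''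
                  · rw [Finset.mem_singleton] at h''
                    exact hw₀y h''.symm
              have hzwχd : χ ({z, w₀} : Finset ℕ) ≠ d₀ := by
                intro h
                rcases hdich _ hzwF h with h' | h'
                · exact (Finset.insert_ne_empty z {w₀}) h'
                · have hxm := h' hxU
                  rcases Finset.mem_insert.mp hxm with h'' | h''
                  · exact hxz h''
                  · rw [Finset.mem_singleton] at h''
                    exact hw₀x h''.symm
              have hzwχz : χ ({z, w₀} : Finset ℕ) ≠ χ ({z} : Finset ℕ) := by
                intro h
                have hm := (hsub3 _ hzwF h)
                  (Finset.mem_insert_of_mem (Finset.mem_singleton_self w₀))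
                rw [Finset.mem_singleton] at hm
                exact hw₀z hm
              exact four_distinct_absurd (hC.lt4 _ (hsingF x hxU)) (hC.lt4 _ (hsingF y hyU))
                (hC.lt4 _ hzF) hd₀ (hC.lt4 _ hzwF) hχ12 (Ne.symm (hzχU x hxU))
                (Ne.symm (hzχU y hyU)) (hsingχd x hxU) (hsingχd y hyU) hzχd
                hzwχx hzwχy hzwχz hzwχd
            · obtain ⟨Q3, hQ3P, hQ3min⟩ := Finset.exists_min_image _ Finset.card hP3
              obtain ⟨hQ3F, hQ3χ, hzQ3ss⟩ := Finset.mem_filter.mp hQ3P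
              have hzQ3 : z ∈ Q3 := hzQ3ss.1 (Finset.mem_singleton_self z)
              have hdich3 : ∀ B ∈ F, χ B = χ ({z} : Finset ℕ) → B ⊆ {z} ∨ Q3 ⊆ B := by
                intro B hB hχ
                rcases hC.chain B hB _ hzF hχ with h | h
                · exact Or.inl h
                · by_cases he : ({z} : Finset ℕ) = B
                  · exact Or.inl (by rw [← he])
                  · exact Or.inr (hC.sub_of_card_le hQ3F hB (hQ3χ.trans hχ.symm)
                      (hQ3min B (Finset.mem_filter.mpr ⟨hB, hχ,
                        Finset.ssubset_iff_subset_ne.mpr ⟨h, he⟩⟩)))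
              rcases (Q3 \ insert z U).eq_empty_or_nonempty with hq3e | hq3ne
              · -- Q3 ⊆ insert z U : second-step kill
                have hQ3sub : Q3 ⊆ insert z U := by
                  intro c hc
                  by_contra hcn
                  have hmem : c ∈ Q3 \ insert z U := Finset.mem_sdiff.mpr ⟨hc, hcn⟩
                  rw [hq3e] at hmem
                  exact absurd hmem (Finset.notMem_empty _)
                have hxQ3 : x ∈ Q3 := by
                  by_contra hxQ3
                  have hsub' : Q3 ⊆ Q2 := by
                    rw [hQ2eq]
                    intro c hc
                    rcases Finset.mem_insert.mp (hQ3sub hc) with h | h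
                    · rw [h]
                      exact Finset.mem_insert_of_mem (Finset.mem_singleton_self z)
                    · rw [hUeq] at h
                      rcases Finset.mem_insert.mp h with h' | h'
                      · exact absurd (h' ▸ hc) hxQ3
                      · rw [Finset.mem_singleton] at h'
                        rw [h']
                        exact Finset.mem_insert_self y {z}
                  have h1 : ({z} : Finset ℕ).card < Q3.card := Finset.card_lt_card hzQ3ss
                  rw [Finset.card_singleton] at h1
                  have h2 : Q3 = Q2 := Finset.eq_of_subset_of_card_le hsub'
                    (by rw [hQ2card]; omega)
                  exact (hzχU y hyU) (by rw [← hQ3χ, h2, hQ2χ])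
                have hyQ3 : y ∈ Q3 := by
                  by_contra hyQ3
                  have hsub' : Q3 ⊆ Q1 := by
                    rw [hQ1eq]
                    intro c hc
                    rcases Finset.mem_insert.mp (hQ3sub hc) with h | h
                    · rw [h]
                      exact Finset.mem_insert_of_mem (Finset.mem_singleton_self z)
                    · rw [hUeq] at h
                      rcases Finset.mem_insert.mp h with h' | h'
                      · rw [h']
                        exact Finset.mem_insert_self x {z}
                      · rw [Finset.mem_singleton] at h'
                        exact absurd (h' ▸ hc) hyQ3
                  have h1 : ({z} : Finset ℕ).card < Q3.card := Finset.card_lt_card hzQ3ss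
                  rw [Finset.card_singleton] at h1
                  have h2 : Q3 = Q1 := Finset.eq_of_subset_of_card_le hsub'
                    (by rw [hQ1card]; omega)
                  exact (hzχU x hxU) (by rw [← hQ3χ, h2, hQ1χ])
                have hQ3eq : Q3 = insert z U := by
                  apply Finset.Subset.antisymm hQ3sub
                  refine Finset.insert_subset hzQ3 ?_
                  rw [hUeq]
                  exact Finset.insert_subset hxQ3 (Finset.singleton_subset_iff.mpr hyQ3)
                have hQ1Q3 : Q1 ⊆ Q3 := by
                  rw [hQ1eq, hQ3eq, hUeq]
                  intro c hc
                  rcases Finset.mem_insert.mp hc with h | h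
                  · rw [h]
                    exact Finset.mem_insert_of_mem (Finset.mem_insert_self x {y})
                  · rw [Finset.mem_singleton] at h
                    rw [h]
                    exact Finset.mem_insert_self z _
                have keyA : ∃ q : ℕ, q ∈ Finset.Icc 1 n ∧ q ∉ insert z U ∧
                    ({z, q} : Finset ℕ) ∈ F := by
                  rcases (F.filter (fun B => χ B = χ ({x} : Finset ℕ) ∧
                      Q1 ⊂ B)).eq_empty_or_nonempty with hPR | hPR
                  · have hsubR : ∀ B ∈ F, χ B = χ ({x} : Finset ℕ) → B ⊆ Q1 := by
                      intro B hB hχ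
                      rcases hdich1 B hB hχ with h | h
                      · exact h.trans hQ1ss.1
                      · by_cases he : Q1 = B
                        · rw [← he]
                        · exfalso
                          have hmem : B ∈ F.filter (fun B => χ B = χ ({x} : Finset ℕ) ∧
                              Q1 ⊂ B) :=
                            Finset.mem_filter.mpr ⟨hB, hχ,
                              Finset.ssubset_iff_subset_ne.mpr ⟨h, he⟩⟩
                          rw [hPR] at hmem
                          exact absurd hmem (Finset.notMem_empty _)
                    obtain ⟨q, hqw, hqZU⟩ := Finset.not_subset.mp hnw3
                    refine ⟨q, hqw, hqZU, ?_⟩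
                    by_contra hzqF
                    obtain ⟨w, hw, hwp⟩ := hC.witness (X := ({z, q} : Finset ℕ))
                      (Finset.insert_subset hzw (Finset.singleton_subset_iff.mpr hqw)) hzqF
                    obtain ⟨hw3F, hw3χ, hw31, hw32⟩ := hw (χ ({z} : Finset ℕ)) (hC.lt4 _ hzF)
                    have hQ3B3 : Q3 ⊆ w (χ ({z} : Finset ℕ)) := by
                      rcases hdich3 _ hw3F hw3χ with h | h
                      · exact absurd (h.trans (Finset.singleton_subset_iff.mpr
                          (Finset.mem_insert_self z {q}))) hw31
                      · exact h
                    obtain ⟨hw1F, hw1χ, hw11, hw12⟩ :=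
                      hw (χ ({x} : Finset ℕ)) (hC.lt4 _ (hsingF x hxU))
                    exact hwp _ (hC.lt4 _ (hsingF x hxU)) _ (hC.lt4 _ hzF)
                      (Ne.symm (hzχU x hxU))
                      (((hsubR _ hw1F hw1χ).trans hQ1Q3).trans hQ3B3)
                  · obtain ⟨R1, hR1P, hR1min⟩ := Finset.exists_min_image _ Finset.card hPR
                    obtain ⟨hR1F, hR1χ, hQ1R1⟩ := Finset.mem_filter.mp hR1P
                    have hdichR : ∀ B ∈ F, χ B = χ ({x} : Finset ℕ) →
                        B ⊆ Q1 ∨ R1 ⊆ B := by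
                      intro B hB hχ
                      rcases hdich1 B hB hχ with h | h
                      · exact Or.inl (h.trans hQ1ss.1)
                      · by_cases he : Q1 = B
                        · exact Or.inl (by rw [← he])
                        · exact Or.inr (hC.sub_of_card_le hR1F hB (hR1χ.trans hχ.symm)
                            (hR1min B (Finset.mem_filter.mpr ⟨hB, hχ,
                              Finset.ssubset_iff_subset_ne.mpr ⟨h, he⟩⟩)))
                    have hR1nZU : ¬ R1 ⊆ insert z U := by
                      intro h
                      have h1 : Q1.card < R1.card := Finset.card_lt_card hQ1R1
                      have h2 : R1 = insert z U := Finset.eq_of_subset_of_card_le h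
                        (by rw [hZUcard, hQ1card] at *; omega)
                      exact (hzχU x hxU) (by rw [← hQ3χ, hQ3eq, ← h2, hR1χ])
                    obtain ⟨q, hqR1, hqZU⟩ := Finset.not_subset.mp hR1nZU
                    have hqw : q ∈ Finset.Icc 1 n := (hC.sub R1 hR1F) hqR1
                    refine ⟨q, hqw, hqZU, ?_⟩
                    by_contra hzqF
                    obtain ⟨w, hw, hwp⟩ := hC.witness (X := ({z, q} : Finset ℕ))
                      (Finset.insert_subset hzw (Finset.singleton_subset_iff.mpr hqw)) hzqF
                    obtain ⟨hw3F, hw3χ, hw31, hw32⟩ := hw (χ ({z} : Finset ℕ)) (hC.lt4 _ hzF)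
                    have hQ3B3 : Q3 ⊆ w (χ ({z} : Finset ℕ)) := by
                      rcases hdich3 _ hw3F hw3χ with h | h
                      · exact absurd (h.trans (Finset.singleton_subset_iff.mpr
                          (Finset.mem_insert_self z {q}))) hw31
                      · exact h
                    obtain ⟨hw1F, hw1χ, hw11, hw12⟩ :=
                      hw (χ ({x} : Finset ℕ)) (hC.lt4 _ (hsingF x hxU))
                    rcases hdichR _ hw1F hw1χ with h | h
                    · exact hwp _ (hC.lt4 _ (hsingF x hxU)) _ (hC.lt4 _ hzF)
                        (Ne.symm (hzχU x hxU)) ((h.trans hQ1Q3).trans hQ3B3)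
                    · exact hw12 ((Finset.insert_subset (hQ1R1.1 hzQ1)
                        (Finset.singleton_subset_iff.mpr hqR1)).trans h)
                obtain ⟨q, hqw, hqZU, hzqF⟩ := keyA
                have hqz : q ≠ z := fun h => hqZU (h ▸ Finset.mem_insert_self z U)
                have hqU : q ∉ U := fun h => hqZU (Finset.mem_insert_of_mem h)
                have hqx : q ≠ x := fun h => hqU (h ▸ hxU)
                have hqy : q ≠ y := fun h => hqU (h ▸ hyU)
                have hzqcard : ({z, q} : Finset ℕ).card = 2 := by
                  rw [Finset.card_insert_of_notMem
                    (Finset.notMem_singleton.mpr (Ne.symm hqz)), Finset.card_singleton]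
                have hzqχx : χ ({z, q} : Finset ℕ) ≠ χ ({x} : Finset ℕ) := by
                  intro h
                  rcases hC.chain _ hzqF _ (hsingF x hxU) h with h' | h'
                  · have hle := Finset.card_le_card h'
                    rw [hzqcard, Finset.card_singleton] at hle
                    omega
                  · have hxm := h' (Finset.mem_singleton_self x)
                    rcases Finset.mem_insert.mp hxm with h'' | h''
                    · exact hxz h''
                    · rw [Finset.mem_singleton] at h''
                      exact hqx h''.symm
                have hzqχy : χ ({z, q} : Finset ℕ) ≠ χ ({y} : Finset ℕ) := by
                  intro h
                  rcases hC.chain _ hzqF _ (hsingF y hyU) h with h' | h'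
                  · have hle := Finset.card_le_card h'
                    rw [hzqcard, Finset.card_singleton] at hle
                    omega
                  · have hym := h' (Finset.mem_singleton_self y)
                    rcases Finset.mem_insert.mp hym with h'' | h''
                    · exact hyz' h''
                    · rw [Finset.mem_singleton] at h''
                      exact hqy h''.symm
                have hzqχd : χ ({z, q} : Finset ℕ) ≠ d₀ := by
                  intro h
                  rcases hdich _ hzqF h with h' | h'
                  · exact (Finset.insert_ne_empty z {q}) h'
                  · have hxm := h' hxU
                    rcases Finset.mem_insert.mp hxm with h'' | h''
                    · exact hxz h''
                    · rw [Finset.mem_singleton] at h''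
                      exact hqx h''.symm
                have hzqχz : χ ({z, q} : Finset ℕ) ≠ χ ({z} : Finset ℕ) := by
                  intro h
                  rcases hdich3 _ hzqF h with h' | h'
                  · have hqm := h'
                      (Finset.mem_insert_of_mem (Finset.mem_singleton_self q))
                    rw [Finset.mem_singleton] at hqm
                    exact hqz hqm
                  · have hxm := h' hxQ3
                    rcases Finset.mem_insert.mp hxm with h'' | h''
                    · exact hxz h''
                    · rw [Finset.mem_singleton] at h''
                      exact hqx h''.symm
                exact four_distinct_absurd (hC.lt4 _ (hsingF x hxU))
                  (hC.lt4 _ (hsingF y hyU)) (hC.lt4 _ hzF) hd₀ (hC.lt4 _ hzqF) hχ12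
                  (Ne.symm (hzχU x hxU)) (Ne.symm (hzχU y hyU)) (hsingχd x hxU)
                  (hsingχd y hyU) hzχd hzqχx hzqχy hzqχz hzqχd
              · -- q₃ exists outside insert z U : first-step kill
                obtain ⟨q₃, hq₃⟩ := hq3ne
                have hq₃Q3 : q₃ ∈ Q3 := (Finset.mem_sdiff.mp hq₃).1
                have hq₃ZU : q₃ ∉ insert z U := (Finset.mem_sdiff.mp hq₃).2
                have hq₃z : q₃ ≠ z := fun h => hq₃ZU (h ▸ Finset.mem_insert_self z U)
                have hq₃U : q₃ ∉ U := fun h => hq₃ZU (Finset.mem_insert_of_mem h)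
                have hq₃w : q₃ ∈ Finset.Icc 1 n := (hC.sub Q3 hQ3F) hq₃Q3
                have hq₃F : ({q₃} : Finset ℕ) ∉ F := by
                  intro hq₃F
                  obtain ⟨h1, h2⟩ := singq q₃ hq₃U hq₃F
                  have h3 : χ ({q₃} : Finset ℕ) ≠ χ ({z} : Finset ℕ) := fun h =>
                    hq₃z (Finset.singleton_inj.mp
                      (hC.eq_of_card_eq hq₃F hzF h (by simp)))
                  exact four_distinct_absurd (hC.lt4 _ (hsingF x hxU))
                    (hC.lt4 _ (hsingF y hyU)) (hC.lt4 _ hzF) hd₀ (hC.lt4 _ hq₃F) hχ12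
                    (Ne.symm (hzχU x hxU)) (Ne.symm (hzχU y hyU)) (hsingχd x hxU)
                    (hsingχd y hyU) hzχd (h2 x hxU) (h2 y hyU) h3 h1
                obtain ⟨w, hw, hwp⟩ :=
                  hC.witness (Finset.singleton_subset_iff.mpr hq₃w) hq₃F
                obtain ⟨hwDF, hwDχ, hwD1, hwD2⟩ := hw d₀ hd₀
                have hUBD : U ⊆ w d₀ := by
                  rcases hdich _ hwDF hwDχ with h | h
                  · rw [h] at hwD1
                    exact absurd (Finset.empty_subset _) hwD1
                  · exact h
                obtain ⟨hw1F, hw1χ, hw11, hw12⟩ :=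
                  hw (χ ({x} : Finset ℕ)) (hC.lt4 _ (hsingF x hxU))
                have hQ1B1 : Q1 ⊆ w (χ ({x} : Finset ℕ)) := by
                  rcases hdich1 _ hw1F hw1χ with h | h
                  · exact absurd (((h.trans
                      (Finset.singleton_subset_iff.mpr hxU)).trans hUBD))
                      (hwp _ (hC.lt4 _ (hsingF x hxU)) d₀ hd₀ (hsingχd x hxU))
                  · exact h
                obtain ⟨hw3F, hw3χ, hw31, hw32⟩ := hw (χ ({z} : Finset ℕ)) (hC.lt4 _ hzF)
                rcases hdich3 _ hw3F hw3χ with h | h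
                · exact hwp _ (hC.lt4 _ hzF) _ (hC.lt4 _ (hsingF x hxU)) (hzχU x hxU)
                    ((h.trans (Finset.singleton_subset_iff.mpr hzQ1)).trans hQ1B1)
                · exact hw32 (Finset.singleton_subset_iff.mpr (h hq₃Q3))
      · -- |U| = 3
        obtain ⟨x, y, z', hxy, hxz, hyz, hUeq⟩ := Finset.card_eq_three.mp hU3
        have hxU : x ∈ U := by rw [hUeq]; simp
        have hyU : y ∈ U := by rw [hUeq]; simp
        have hzU : z' ∈ U := by rw [hUeq]; simp
        have hTU : ({x, y} : Finset ℕ) ⊆ U :=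
          Finset.insert_subset hxU (Finset.singleton_subset_iff.mpr hyU)
        have hTF : ({x, y} : Finset ℕ) ∈ F := hint _ hTU
        have hTcard : ({x, y} : Finset ℕ).card = 2 := by
          rw [Finset.card_insert_of_notMem (Finset.notMem_singleton.mpr hxy),
            Finset.card_singleton]
        have hTχd : χ ({x, y} : Finset ℕ) ≠ d₀ := by
          intro h
          rcases hdich _ hTF h with h' | h'
          · exact (Finset.insert_ne_empty x {y}) h'
          · have := Finset.card_le_card h'
            rw [hTcard, hU3] at this
            omega
        rcases (F.filter (fun B => χ B = χ ({x, y} : Finset ℕ) ∧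
            ({x, y} : Finset ℕ) ⊂ B)).eq_empty_or_nonempty with hPQ | hPQ
        · have hsub : ∀ B ∈ F, χ B = χ ({x, y} : Finset ℕ) → B ⊆ {x, y} := by
            intro B hB hχ
            rcases hC.chain B hB _ hTF hχ with h | h
            · exact h
            · by_cases he : ({x, y} : Finset ℕ) = B
              · rw [← he]
              · exfalso
                have hmem : B ∈ F.filter (fun B => χ B = χ ({x, y} : Finset ℕ) ∧
                    ({x, y} : Finset ℕ) ⊂ B) :=
                  Finset.mem_filter.mpr ⟨hB, hχ, Finset.ssubset_iff_subset_ne.mpr ⟨h, he⟩⟩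
                rw [hPQ] at hmem
                exact absurd hmem (Finset.notMem_empty _)
          apply hC.not_all
          intro X hXw
          by_contra hX
          obtain ⟨w, hw, hwp⟩ := hC.witness hXw hX
          obtain ⟨hwDF, hwDχ, hwD1, hwD2⟩ := hw d₀ hd₀
          have hUBD : U ⊆ w d₀ := by
            rcases hdich _ hwDF hwDχ with h | h
            · rw [h] at hwD1
              exact absurd (Finset.empty_subset X) hwD1
            · exact h
          obtain ⟨hwjF, hwjχ, hwj1, hwj2⟩ := hw (χ ({x, y} : Finset ℕ)) (hC.lt4 _ hTF)
          exact hwp _ (hC.lt4 _ hTF) d₀ hd₀ hTχd ((hsub _ hwjF hwjχ).trans (hTU.trans hUBD))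
        · obtain ⟨Q, hQP, hQmin⟩ := Finset.exists_min_image _ Finset.card hPQ
          obtain ⟨hQF, hQχ, hTQ⟩ := Finset.mem_filter.mp hQP
          have hdichj : ∀ B ∈ F, χ B = χ ({x, y} : Finset ℕ) → B ⊆ {x, y} ∨ Q ⊆ B := by
            intro B hB hχ
            rcases hC.chain B hB _ hTF hχ with h | h
            · exact Or.inl h
            · by_cases he : ({x, y} : Finset ℕ) = B
              · exact Or.inl (by rw [← he])
              · exact Or.inr (hC.sub_of_card_le hQF hB (hQχ.trans hχ.symm)
                  (hQmin B (Finset.mem_filter.mpr ⟨hB, hχ,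
                    Finset.ssubset_iff_subset_ne.mpr ⟨h, he⟩⟩)))
          have hQnU : ¬ Q ⊆ U := by
            intro h
            have h1 : ({x, y} : Finset ℕ).card < Q.card := Finset.card_lt_card hTQ
            rw [hTcard] at h1
            have h2 : Q = U := Finset.eq_of_subset_of_card_le h (by rw [hU3]; omega)
            exact hTχd (by rw [← hQχ, h2, hUχ])
          obtain ⟨q, hqQ, hqU⟩ := Finset.not_subset.mp hQnU
          have hqw : q ∈ Finset.Icc 1 n := (hC.sub Q hQF) hqQ
          have hqF : ({q} : Finset ℕ) ∈ F := by
            by_contra hqF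
            obtain ⟨w, hw, hwp⟩ := hC.witness (Finset.singleton_subset_iff.mpr hqw) hqF
            obtain ⟨hwDF, hwDχ, hwD1, hwD2⟩ := hw d₀ hd₀
            have hUBD : U ⊆ w d₀ := by
              rcases hdich _ hwDF hwDχ with h | h
              · rw [h] at hwD1
                exact absurd (Finset.empty_subset _) hwD1
              · exact h
            obtain ⟨hwjF, hwjχ, hwj1, hwj2⟩ := hw (χ ({x, y} : Finset ℕ)) (hC.lt4 _ hTF)
            rcases hdichj _ hwjF hwjχ with h | h
            · exact hwp _ (hC.lt4 _ hTF) d₀ hd₀ hTχd (h.trans (hTU.trans hUBD))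
            · exact hwj2 (Finset.singleton_subset_iff.mpr (h hqQ))
          have hqχd : χ ({q} : Finset ℕ) ≠ d₀ := by
            intro h
            rcases hdich _ hqF h with h' | h'
            · exact (Finset.singleton_ne_empty q) h'
            · have := Finset.card_le_card h'
              rw [Finset.card_singleton] at this
              omega
          have hsingne : ∀ a ∈ U, χ ({q} : Finset ℕ) ≠ χ {a} := by
            intro a ha h
            have heq : ({q} : Finset ℕ) = {a} :=
              hC.eq_of_card_eq hqF (hsingF a ha) h (by simp)
            exact hqU (by rw [Finset.singleton_inj.mp heq]; exact ha)
          exact four_distinct_absurd (hC.lt4 _ (hsingF x hxU)) (hC.lt4 _ (hsingF y hyU))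
            (hC.lt4 _ (hsingF z' hzU)) hd₀ (hC.lt4 _ hqF)
            (hsingχne x hxU y hyU hxy) (hsingχne x hxU z' hzU hxz) (hsingχne y hyU z' hzU hyz)
            (hsingχd x hxU) (hsingχd y hyU) (hsingχd z' hzU)
            (hsingne x hxU) (hsingne y hyU) (hsingne z' hzU) hqχd

lemma compl_compl_world {n : ℕ} {A : Finset ℕ} (h : A ⊆ Finset.Icc 1 n) :
    Finset.Icc 1 n \ (Finset.Icc 1 n \ A) = A := by
  rw [Finset.sdiff_sdiff_self_left]
  exact Finset.inter_eq_right.mpr h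

lemma compl_rev {n : ℕ} {A B : Finset ℕ} (hA : A ⊆ Finset.Icc 1 n)
    (hB : B ⊆ Finset.Icc 1 n)
    (h : Finset.Icc 1 n \ A ⊆ Finset.Icc 1 n \ B) : B ⊆ A := by
  have h2 := Finset.sdiff_subset_sdiff (Finset.Subset.refl (Finset.Icc 1 n)) h
  rwa [compl_compl_world hA, compl_compl_world hB] at h2

lemma compl_inj {n : ℕ} {A B : Finset ℕ} (hA : A ⊆ Finset.Icc 1 n)
    (hB : B ⊆ Finset.Icc 1 n)
    (h : Finset.Icc 1 n \ A = Finset.Icc 1 n \ B) : A = B := by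
  rw [← compl_compl_world hA, h, compl_compl_world hB]

lemma compl {n : ℕ} {F : Finset (Finset ℕ)} {χ : Finset ℕ → ℕ} (hC : Ctx n F χ) :
    Ctx n (F.image (fun A => Finset.Icc 1 n \ A))
      (fun A => χ (Finset.Icc 1 n \ A)) := by
  classical
  refine ⟨hC.hn, ?_, ?_, ?_, ?_, ?_⟩
  · intro A' hA'
    obtain ⟨A, hA, rfl⟩ := Finset.mem_image.mp hA'
    exact Finset.sdiff_subset
  · rintro ⟨S, hS, hcard, hpair⟩
    apply hC.noAC
    have hSw : ∀ A ∈ S, A ⊆ Finset.Icc 1 n := by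
      intro A hA
      obtain ⟨C, hCF, rfl⟩ := Finset.mem_image.mp (hS hA)
      exact Finset.sdiff_subset
    refine ⟨S.image (fun A => Finset.Icc 1 n \ A), ?_, ?_, ?_⟩
    · intro B hB
      obtain ⟨A, hA, rfl⟩ := Finset.mem_image.mp hB
      obtain ⟨C, hCF, hCe⟩ := Finset.mem_image.mp (hS hA)
      rw [← hCe, compl_compl_world (hC.sub C hCF)]
      exact hCF
    · rw [Finset.card_image_of_injOn, hcard]
      intro A hA B hB he
      exact compl_inj (hSw A hA) (hSw B hB) he
    · intro A' hA' B' hB' hne hsub'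
      obtain ⟨A, hA, rfl⟩ := Finset.mem_image.mp hA'
      obtain ⟨B, hB, rfl⟩ := Finset.mem_image.mp hB'
      have hBA : B ⊆ A := compl_rev (hSw A hA) (hSw B hB) hsub'
      have hne' : B ≠ A := fun h => hne (by rw [h])
      exact hpair B hB A hA hne' hBA
  · intro X hXw hX
    have hX₀F : Finset.Icc 1 n \ X ∉ F := by
      intro h
      apply hX
      have he : Finset.Icc 1 n \ (Finset.Icc 1 n \ X) = X := compl_compl_world hXw
      exact he ▸ Finset.mem_image_of_mem _ h
    obtain ⟨S, hS, hcard, hpair⟩ := hC.sat (Finset.Icc 1 n \ X) Finset.sdiff_subset hX₀F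
    have hSw : ∀ A ∈ S, A ⊆ Finset.Icc 1 n := by
      intro A hA
      rcases Finset.mem_insert.mp (hS hA) with h | h
      · rw [h]; exact Finset.sdiff_subset
      · exact hC.sub A h
    refine ⟨S.image (fun A => Finset.Icc 1 n \ A), ?_, ?_, ?_⟩
    · intro B hB
      obtain ⟨A, hA, rfl⟩ := Finset.mem_image.mp hB
      rcases Finset.mem_insert.mp (hS hA) with h | h
      · apply Finset.mem_insert.mpr
        left
        rw [h, compl_compl_world hXw]
      · exact Finset.mem_insert_of_mem (Finset.mem_image_of_mem _ h)
    · rw [Finset.card_image_of_injOn, hcard]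
      intro A hA B hB he
      exact compl_inj (hSw A hA) (hSw B hB) he
    · intro A' hA' B' hB' hne hsub'
      obtain ⟨A, hA, rfl⟩ := Finset.mem_image.mp hA'
      obtain ⟨B, hB, rfl⟩ := Finset.mem_image.mp hB'
      have hBA : B ⊆ A := compl_rev (hSw A hA) (hSw B hB) hsub'
      have hne' : B ≠ A := fun h => hne (by rw [h])
      exact hpair B hB A hA hne' hBA
  · intro A' hA'
    obtain ⟨A, hA, rfl⟩ := Finset.mem_image.mp hA'
    rw [compl_compl_world (hC.sub A hA)]
    exact hC.lt4 A hA
  · intro A' hA' B' hB' he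
    obtain ⟨A, hA, rfl⟩ := Finset.mem_image.mp hA'
    obtain ⟨B, hB, rfl⟩ := Finset.mem_image.mp hB'
    rw [compl_compl_world (hC.sub A hA), compl_compl_world (hC.sub B hB)] at he
    rcases hC.chain A hA B hB he with h | h
    · exact Or.inr (Finset.sdiff_subset_sdiff (Finset.Subset.refl _) h)
    · exact Or.inl (Finset.sdiff_subset_sdiff (Finset.Subset.refl _) h)

end Ctx
end FiveSat

/-- For every integer `n ≥ 5`, every 5-antichain saturated family of subsets of `[n]` has
size at least `4n - 2`. -/
theorem five_saturated_lower_bound (n : ℕ) (hn : 5 ≤ n) (F : Finset (Finset ℕ))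
    (hF : IsAntichainSaturated n 5 F) :
    4 * n - 2 ≤ F.card := by
  classical
  obtain ⟨hsub, hnoAC, hsat⟩ := hF
  have hbound : ∀ S ⊆ F, FiveSat.IsACF S → S.card ≤ 4 := by
    intro S hS hac
    by_contra h
    push_neg at h
    obtain ⟨T, hT, hTcard⟩ := Finset.exists_subset_card_eq (show 5 ≤ S.card by omega)
    exact hnoAC ⟨T, hT.trans hS, hTcard, fun A hA B hB hne => hac A (hT hA) B (hT hB) hne⟩
  obtain ⟨χ, hχ4, hχchain⟩ := FiveSat.dilworth F.card F rfl 4 hbound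
  have hC : FiveSat.Ctx n F χ := ⟨hn, hsub, hnoAC, hsat, hχ4, hχchain⟩
  by_cases hcov : ∀ ℓ, 1 ≤ ℓ → ℓ ≤ n - 1 → ∀ k, k < 4 →
      ∃ A, A ∈ F ∧ χ A = k ∧ A.card = ℓ
  · -- counting
    have hcount : ∀ k, k < 4 → ∃ g : ℕ → Finset ℕ,
        ∀ ℓ ∈ Finset.Icc 1 (n-1), g ℓ ∈ F ∧ χ (g ℓ) = k ∧ (g ℓ).card = ℓ := by
      intro k hk
      have hex : ∀ ℓ : ℕ, ∃ A : Finset ℕ,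
          ℓ ∈ Finset.Icc 1 (n-1) → (A ∈ F ∧ χ A = k ∧ A.card = ℓ) := by
        intro ℓ
        by_cases hℓ : ℓ ∈ Finset.Icc 1 (n-1)
        · rw [Finset.mem_Icc] at hℓ
          obtain ⟨A, h⟩ := hcov ℓ hℓ.1 hℓ.2 k hk
          exact ⟨A, fun _ => h⟩
        · exact ⟨∅, fun h => absurd h hℓ⟩
      choose g hg using hex
      exact ⟨g, fun ℓ hℓ => hg ℓ hℓ⟩
    have hWne : (1 : ℕ) ∈ Finset.Icc 1 n := Finset.mem_Icc.mpr ⟨le_refl 1, by omega⟩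
    have hEW : (∅ : Finset ℕ) ≠ Finset.Icc 1 n := by
      intro h
      rw [← h] at hWne
      exact absurd hWne (Finset.notMem_empty 1)
    have hsplit : F = (Finset.range 4).biUnion (fun k => F.filter (fun A => χ A = k)) := by
      ext A
      simp only [Finset.mem_biUnion, Finset.mem_filter, Finset.mem_range]
      constructor
      · intro hA
        exact ⟨χ A, hχ4 A hA, hA, rfl⟩
      · rintro ⟨k, _, hA, _⟩
        exact hA
    have hdisj : ∀ k ∈ Finset.range 4, ∀ k' ∈ Finset.range 4, k ≠ k' →
        Disjoint (F.filter (fun A => χ A = k)) (F.filter (fun A => χ A = k')) := by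
      intro k _ k' _ hne
      rw [Finset.disjoint_left]
      intro A hA hA'
      exact hne ((Finset.mem_filter.mp hA).2.symm.trans (Finset.mem_filter.mp hA').2)
    have hcardsum : F.card =
        ∑ k ∈ Finset.range 4, (F.filter (fun A => χ A = k)).card := by
      conv_lhs => rw [hsplit]
      exact Finset.card_biUnion hdisj
    have hklower : ∀ k ∈ Finset.range 4,
        (n-1) + ((F.filter (fun A => χ A = k)) ∩ {∅, Finset.Icc 1 n}).card ≤
          (F.filter (fun A => χ A = k)).card := by
      intro k hk
      rw [Finset.mem_range] at hk
      obtain ⟨g, hg⟩ := hcount k hk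
      have h1 : (Finset.Icc 1 (n-1)).image g ⊆ F.filter (fun A => χ A = k) := by
        intro A hA
        obtain ⟨ℓ, hℓ, rfl⟩ := Finset.mem_image.mp hA
        obtain ⟨h1', h2', _⟩ := hg ℓ hℓ
        exact Finset.mem_filter.mpr ⟨h1', h2'⟩
      have h2 : Disjoint ((Finset.Icc 1 (n-1)).image g)
          ((F.filter (fun A => χ A = k)) ∩ {∅, Finset.Icc 1 n}) := by
        rw [Finset.disjoint_left]
        intro A hA hA2
        obtain ⟨ℓ, hℓ, rfl⟩ := Finset.mem_image.mp hA
        have hcard := (hg ℓ hℓ).2.2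
        rw [Finset.mem_Icc] at hℓ
        have hmem := (Finset.mem_inter.mp hA2).2
        rcases Finset.mem_insert.mp hmem with h | h
        · rw [h, Finset.card_empty] at hcard
          omega
        · rw [Finset.mem_singleton] at h
          rw [h, Nat.card_Icc] at hcard
          omega
      have hinj : Set.InjOn g (Finset.Icc 1 (n-1)) := by
        intro ℓ hℓ ℓ' hℓ' he
        have e1 := (hg ℓ (Finset.mem_coe.mp hℓ)).2.2
        have e2 := (hg ℓ' (Finset.mem_coe.mp hℓ')).2.2
        rw [← e1, ← e2, he]
      have h3 : ((Finset.Icc 1 (n-1)).image g).card = n - 1 := by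
        rw [Finset.card_image_of_injOn hinj, Nat.card_Icc]
        exact Nat.add_sub_cancel (n-1) 1
      have h4 := Finset.card_union_of_disjoint h2
      have h5 : ((Finset.Icc 1 (n-1)).image g) ∪
          ((F.filter (fun A => χ A = k)) ∩ {∅, Finset.Icc 1 n}) ⊆
          F.filter (fun A => χ A = k) :=
        Finset.union_subset h1 Finset.inter_subset_left
      have h6 := Finset.card_le_card h5
      rw [h4, h3] at h6
      exact h6
    have hsum2 : ∑ k ∈ Finset.range 4,
        ((F.filter (fun A => χ A = k)) ∩ {∅, Finset.Icc 1 n}).card = 2 := by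
      have hEF : (∅ : Finset ℕ) ∈ F := hC.empty_mem
      have hWF : Finset.Icc 1 n ∈ F := hC.world_mem
      have heq : ({∅, Finset.Icc 1 n} : Finset (Finset ℕ)) =
          (Finset.range 4).biUnion
            (fun k => (F.filter (fun A => χ A = k)) ∩ {∅, Finset.Icc 1 n}) := by
        ext A
        simp only [Finset.mem_biUnion, Finset.mem_inter, Finset.mem_filter,
          Finset.mem_range]
        constructor
        · intro hA
          have hAF : A ∈ F := by
            rcases Finset.mem_insert.mp hA with h | h
            · rw [h]; exact hEF
            · rw [Finset.mem_singleton] at h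
              rw [h]; exact hWF
          exact ⟨χ A, hχ4 A hAF, ⟨hAF, rfl⟩, hA⟩
        · rintro ⟨k, _, _, hA⟩
          exact hA
      have hdisj2 : ∀ k ∈ Finset.range 4, ∀ k' ∈ Finset.range 4, k ≠ k' →
          Disjoint ((F.filter (fun A => χ A = k)) ∩ {∅, Finset.Icc 1 n})
            ((F.filter (fun A => χ A = k')) ∩ {∅, Finset.Icc 1 n}) := by
        intro k hk k' hk' hne
        exact Finset.disjoint_of_subset_left Finset.inter_subset_left
          (Finset.disjoint_of_subset_right Finset.inter_subset_left
            (hdisj k hk k' hk' hne))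
      have hc2 : ({∅, Finset.Icc 1 n} : Finset (Finset ℕ)).card = 2 := by
        rw [Finset.card_insert_of_notMem (Finset.notMem_singleton.mpr hEW),
          Finset.card_singleton]
      rw [← Finset.card_biUnion hdisj2, ← heq, hc2]
    have hge : ∑ k ∈ Finset.range 4, ((n-1) +
        ((F.filter (fun A => χ A = k)) ∩ {∅, Finset.Icc 1 n}).card) ≤
        ∑ k ∈ Finset.range 4, (F.filter (fun A => χ A = k)).card :=
      Finset.sum_le_sum hklower
    rw [Finset.sum_add_distrib, hsum2, Finset.sum_const, Finset.card_range] at hge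
    rw [hcardsum]
    have : 4 • (n - 1) = 4 * (n - 1) := by rw [smul_eq_mul]
    omega
  · -- some missing level: the engines give a contradiction
    exfalso
    push_neg at hcov
    obtain ⟨ℓ, hℓ1, hℓ2, k, hk4, hmiss⟩ := hcov
    set M := (Finset.Icc 1 (n-1)).filter (fun ℓ' => ∃ k' : ℕ,
        (∀ A ∈ F, χ A = k' → A.card ≠ ℓ') ∧ k' < 4) with hM
    have hMne : M.Nonempty :=
      ⟨ℓ, Finset.mem_filter.mpr ⟨Finset.mem_Icc.mpr ⟨hℓ1, hℓ2⟩, k, hmiss, hk4⟩⟩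
    have hmax := Finset.mem_filter.mp (M.max'_mem hMne)
    obtain ⟨hmaxIcc, k₀, hmiss₀, hk₀4⟩ := hmax
    rw [Finset.mem_Icc] at hmaxIcc
    obtain ⟨hL1, hL2⟩ := hmaxIcc
    by_cases hLtop : M.max' hMne ≤ n - 2
    · -- engine 1 applies at the maximal missing level
      refine hC.engine1 (M.max' hMne) hL1 (by omega) k₀ hk₀4 hmiss₀ ?_
      intro k' hk'
      by_contra hnc
      have hmem : M.max' hMne + 1 ∈ M := by
        refine Finset.mem_filter.mpr ⟨Finset.mem_Icc.mpr ⟨by omega, by omega⟩, k', ?_, hk'⟩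
        intro A hA hχA hcard
        exact hnc ⟨A, hA, hχA, hcard⟩
      have := M.le_max' _ hmem
      omega
    · -- maximal missing level is n-1 : pass to the complement family, level 1
      have hLeq : M.max' hMne = n - 1 := by omega
      have hC' := hC.compl
      refine hC'.engine2 k₀ hk₀4 ?_
      intro A' hA' hχ' hcard'
      obtain ⟨A, hA, rfl⟩ := Finset.mem_image.mp hA'
      rw [FiveSat.Ctx.compl_compl_world (hC.sub A hA)] at hχ'
      have hAcard : A.card ≤ n := by
        have := Finset.card_le_card (hC.sub A hA)
        rwa [Nat.card_Icc] at this
      rw [Finset.card_sdiff_of_subset (hC.sub A hA), Nat.card_Icc] at hcard'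
      have : A.card = n - 1 := by omega
      rw [hLeq] at hmiss₀
      exact hmiss₀ A hA hχ' this
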